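/- arXiv:2207.09518 — 5 statements merged into one kernel-verified Lean document; each statement's English description precedes it below -/
import Mathlib

section
/- Let γ, p ∈ ℝ satisfy 0 ≤ γ + 2p and γ + 2p < 1, and let W : ℝ → ℝ be locally bounded and measurable with |W(Y)| ≤ C·e^{(γ/2+p)|Y|} for all Y ∈ ℝ and some constant C > 0. Then the constant C_W := ∫_{−∞}^0 ∫_{log(1−e^Y)}^{∞} e^{(Y−Z)/2} |W(Y−Z)| dZ dY is finite. -/
open MeasureTheory Real Set

lemma aux_exp_Iio (b a : ℝ) (hb : 0 < b) :
    IntegrableOn (fun x : ℝ => Real.exp (b * x)) (Iio a) := by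
  have h := exp_neg_integrableOn_Ioi (-a) hb
  have h' := (integrable_indicator_iff (measurableSet_Ioi : MeasurableSet (Ioi (-a)))).mpr h
  have h2 := h'.comp_neg
  rw [← integrable_indicator_iff measurableSet_Iio]
  refine Integrable.congr h2 (ae_of_all _ fun x => ?_)
  by_cases hx : x < a
  · have : -a < -x := by linarith
    simp [Set.indicator, hx, this]
  · have : ¬ (-a < -x) := by intro h'; exact hx (by linarith)
    simp [Set.indicator, hx, this]

lemma aux_int_exp (b Y L : ℝ) (hb : 0 < b) :
    ∫ Z in Ioi L, Real.exp (b * (Y - Z)) = Real.exp (b * (Y - L)) / b := by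
  have h1 : (fun Z : ℝ => Real.exp (b * (Y - Z)))
      = fun Z : ℝ => Real.exp (b * Y) * Real.exp (-(Z * b)) := by
    funext Z; rw [← Real.exp_add]; ring_nf
  rw [h1, MeasureTheory.integral_const_mul]
  have h2 := integral_comp_mul_right_Ioi (fun x => Real.exp (-x)) L hb
  simp only [smul_eq_mul] at h2
  rw [h2, integral_exp_neg_Ioi]
  rw [eq_div_iff hb.ne']
  rw [show rexp (b * Y) * (b⁻¹ * rexp (-(L * b))) * b = rexp (b * Y) * rexp (-(L * b)) * (b⁻¹ * b) by ring, inv_mul_cancel₀ hb.ne', mul_one, ← Real.exp_add]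
  ring_nf

lemma aux_key (b : ℝ) (hb : 0 < b) (hb1 : b < 1) :
    IntegrableOn (fun Y : ℝ => Real.exp (b * (Y - Real.log (1 - Real.exp Y)))) (Iio (0:ℝ)) := by
  have hlog2 : (0:ℝ) ≤ Real.log 2 := Real.log_nonneg one_le_two
  have hmeas : Measurable fun Y : ℝ => Real.exp (b * (Y - Real.log (1 - Real.exp Y))) := by
    exact Real.measurable_exp.comp ((measurable_const.mul (measurable_id.sub
      (Real.measurable_log.comp (measurable_const.sub Real.measurable_exp)))))
  have hA : IntegrableOn (fun Y : ℝ => Real.exp (b * (Y - Real.log (1 - Real.exp Y))))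
      (Iio (-Real.log 2)) := by
    refine Integrable.mono' (((aux_exp_Iio b (-Real.log 2) hb)).const_mul 2)
      hmeas.aestronglyMeasurable ?_
    rw [ae_restrict_iff' measurableSet_Iio]
    refine ae_of_all _ fun Y hY => ?_
    have hY' : Y < -Real.log 2 := hY
    have hexpY : Real.exp Y < 1/2 := by
      have := Real.exp_lt_exp.mpr hY'
      rw [Real.exp_neg, Real.exp_log two_pos] at this
      linarith
    have hx : (1:ℝ)/2 < 1 - Real.exp Y := by linarith
    have hlogx : -Real.log 2 ≤ Real.log (1 - Real.exp Y) := by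
      have := Real.log_le_log (by norm_num : (0:ℝ) < 1/2) hx.le
      rwa [show (1:ℝ)/2 = 2⁻¹ by norm_num, Real.log_inv] at this
    have hlogx0 : Real.log (1 - Real.exp Y) < 0 :=
      Real.log_neg (by linarith) (by nlinarith [Real.exp_pos Y])
    rw [Real.norm_eq_abs, abs_of_pos (Real.exp_pos _)]
    have harg : b * (Y - Real.log (1 - Real.exp Y)) ≤ b * Y + Real.log 2 := by nlinarith
    calc Real.exp (b * (Y - Real.log (1 - Real.exp Y))) ≤ Real.exp (b * Y + Real.log 2) :=
          Real.exp_le_exp.mpr harg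
      _ = Real.exp (b * Y) * 2 := by rw [Real.exp_add, Real.exp_log two_pos]
      _ = 2 * Real.exp (b * Y) := by ring
  have hB : IntegrableOn (fun Y : ℝ => Real.exp (b * (Y - Real.log (1 - Real.exp Y))))
      (Ico (-Real.log 2) (0:ℝ)) := by
    have hII : IntervalIntegrable (fun x : ℝ => x ^ (-b)) volume 0 (Real.log 2 + 1) :=
      intervalIntegral.intervalIntegrable_rpow' (by linarith)
    have hIIneg : IntervalIntegrable (fun x : ℝ => (-x) ^ (-b)) volume 0 (-(Real.log 2 + 1)) := by
      simpa using (IntervalIntegrable.iff_comp_neg (by simp)).mp hII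
    rw [intervalIntegrable_iff] at hIIneg
    have hset : Set.uIoc (0:ℝ) (-(Real.log 2 + 1)) = Set.Ioc (-(Real.log 2 + 1)) 0 := by
      rw [Set.uIoc_comm, Set.uIoc_of_le (by linarith)]
    rw [hset] at hIIneg
    have hg : IntegrableOn (fun Y : ℝ => 2 * (-Y) ^ (-b)) (Ico (-Real.log 2) (0:ℝ)) := by
      refine ((hIIneg.mono_set ?_).const_mul 2)
      intro x hx
      exact ⟨by linarith [hx.1], hx.2.le⟩
    refine Integrable.mono' hg hmeas.aestronglyMeasurable ?_
    rw [ae_restrict_iff' measurableSet_Ico]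
    refine ae_of_all _ fun Y hY => ?_
    obtain ⟨hY1, hY2⟩ := hY
    have hexpY1 : Real.exp Y < 1 := by
      rw [show (1:ℝ) = Real.exp 0 by simp]; exact Real.exp_lt_exp.mpr hY2
    have hexpY2 : (1:ℝ)/2 ≤ Real.exp Y := by
      have := Real.exp_le_exp.mpr hY1
      calc (1:ℝ)/2 = Real.exp (-Real.log 2) := by
            rw [Real.exp_neg, Real.exp_log two_pos]; norm_num
        _ ≤ Real.exp Y := this
    set x := 1 - Real.exp Y with hxdef
    have hx0 : 0 < x := by simp [hxdef]; linarith
    have hx2 : -Y/2 ≤ x := by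
      have h := Real.add_one_le_exp (-Y)
      rw [Real.exp_neg] at h
      have hep := Real.exp_pos Y
      have : (-Y + 1) * Real.exp Y ≤ 1 := by
        rw [← mul_le_mul_iff_left₀ hep] at h
        calc (-Y + 1) * Real.exp Y ≤ (Real.exp Y)⁻¹ * Real.exp Y := h
          _ = 1 := inv_mul_cancel₀ hep.ne'
      nlinarith
    have hY0 : 0 < -Y := by linarith
    rw [Real.norm_eq_abs, abs_of_pos (Real.exp_pos _)]
    have step1 : Real.exp (b * (Y - Real.log x)) ≤ Real.exp (-b * Real.log x) := by
      apply Real.exp_le_exp.mpr; nlinarith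
    have step2 : Real.exp (-b * Real.log x) = x ^ (-b) := by
      rw [Real.rpow_def_of_pos hx0]; ring_nf
    have step3 : x ^ (-b) ≤ (-Y/2) ^ (-b) :=
      Real.rpow_le_rpow_of_nonpos (by linarith) hx2 (by linarith)
    have step4 : (-Y/2) ^ (-b) ≤ 2 * (-Y) ^ (-b) := by
      rw [Real.div_rpow (by linarith) (by norm_num), Real.rpow_neg (by norm_num : (0:ℝ) ≤ 2)]
      have h2b : (2:ℝ) ^ b ≤ 2 := by
        calc (2:ℝ) ^ b ≤ (2:ℝ) ^ (1:ℝ) := Real.rpow_le_rpow_of_exponent_le one_le_two hb1.le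
          _ = 2 := Real.rpow_one 2
      have h2b0 : (0:ℝ) < (2:ℝ) ^ b := Real.rpow_pos_of_pos two_pos b
      have hYb : (0:ℝ) ≤ (-Y) ^ (-b) := Real.rpow_nonneg hY0.le _
      rw [div_inv_eq_mul]
      nlinarith
    calc Real.exp (b * (Y - Real.log x)) ≤ Real.exp (-b * Real.log x) := step1
      _ = x ^ (-b) := step2
      _ ≤ (-Y/2) ^ (-b) := step3
      _ ≤ 2 * (-Y) ^ (-b) := step4
  have hunion := hA.union hB
  rwa [Iio_union_Ico_eq_Iio (by linarith)] at hunion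

/-- For `0 ≤ γ + 2p < 1` and a locally bounded measurable `W` with
`|W(Y)| ≤ C·e^{(γ/2+p)|Y|}`, the constant
`C_W = ∫_{−∞}^0 ∫_{log(1−e^Y)}^{∞} e^{(Y−Z)/2} |W(Y−Z)| dZ dY` is finite. -/
theorem stmt_0 (γ p : ℝ) (h0 : 0 ≤ γ + 2 * p) (h1 : γ + 2 * p < 1)
    (W : ℝ → ℝ) (hWmeas : Measurable W)
    (hWloc : ∀ r : ℝ, ∃ M : ℝ, ∀ Y ∈ Set.Icc (-r) r, |W Y| ≤ M)
    (C : ℝ) (hCpos : 0 < C)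
    (hW : ∀ Y : ℝ, |W Y| ≤ C * Real.exp ((γ / 2 + p) * |Y|)) :
    (∫⁻ Y in Set.Iio (0 : ℝ), ∫⁻ Z in Set.Ioi (Real.log (1 - Real.exp Y)),
        ENNReal.ofReal (Real.exp ((Y - Z) / 2) * |W (Y - Z)|)) < ⊤ := by
  set a : ℝ := γ / 2 + p with ha
  have ha0 : 0 ≤ a := by simp only [ha]; linarith
  have ha1 : a < 1/2 := by simp only [ha]; linarith
  set b1 : ℝ := 1/2 - a with hb1def
  set b2 : ℝ := 1/2 + a with hb2def
  have hb1 : 0 < b1 := by simp only [hb1def]; linarith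
  have hb1' : b1 < 1 := by simp only [hb1def]; linarith
  have hb2 : 0 < b2 := by simp only [hb2def]; linarith
  have hb2' : b2 < 1 := by simp only [hb2def]; linarith
  -- pointwise bound
  have hpt : ∀ u : ℝ, Real.exp (u/2) * |W u|
      ≤ C * (Real.exp (b1 * u) + Real.exp (b2 * u)) := by
    intro u
    have h2 : Real.exp (u/2) * |W u| ≤ Real.exp (u/2) * (C * Real.exp (a * |u|)) :=
      mul_le_mul_of_nonneg_left (hW u) (Real.exp_pos _).le
    refine h2.trans ?_
    rcases le_or_gt 0 u with hu | hu
    · rw [abs_of_nonneg hu]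
      have he : Real.exp (u/2) * (C * Real.exp (a * u)) = C * Real.exp (b2 * u) := by
        rw [show b2 * u = u/2 + a * u by rw [hb2def]; ring, Real.exp_add]; ring
      rw [he]
      nlinarith [(Real.exp_pos (b1 * u)).le]
    · rw [abs_of_neg hu]
      have he : Real.exp (u/2) * (C * Real.exp (a * -u)) = C * Real.exp (b1 * u) := by
        rw [show b1 * u = u/2 + a * -u by rw [hb1def]; ring, Real.exp_add]; ring
      rw [he]
      nlinarith [(Real.exp_pos (b2 * u)).le]
  -- inner integral bound
  set G : ℝ → ℝ := fun Y => C * (Real.exp (b1 * (Y - Real.log (1 - Real.exp Y))) / b1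
      + Real.exp (b2 * (Y - Real.log (1 - Real.exp Y))) / b2) with hGdef
  have hinner : ∀ Y : ℝ,
      (∫⁻ Z in Set.Ioi (Real.log (1 - Real.exp Y)),
        ENNReal.ofReal (Real.exp ((Y - Z) / 2) * |W (Y - Z)|)) ≤ ENNReal.ofReal (G Y) := by
    intro Y
    set L : ℝ := Real.log (1 - Real.exp Y) with hL
    have hint1 : IntegrableOn (fun Z : ℝ => Real.exp (b1 * (Y - Z))) (Ioi L) := by
      have h := (exp_neg_integrableOn_Ioi L hb1).const_mul (Real.exp (b1 * Y))
      have he : (fun Z : ℝ => Real.exp (b1 * Y) * Real.exp (-b1 * Z))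
          = fun Z : ℝ => Real.exp (b1 * (Y - Z)) := by
        funext Z; rw [← Real.exp_add]; ring_nf
      rwa [he] at h
    have hint2 : IntegrableOn (fun Z : ℝ => Real.exp (b2 * (Y - Z))) (Ioi L) := by
      have h := (exp_neg_integrableOn_Ioi L hb2).const_mul (Real.exp (b2 * Y))
      have he : (fun Z : ℝ => Real.exp (b2 * Y) * Real.exp (-b2 * Z))
          = fun Z : ℝ => Real.exp (b2 * (Y - Z)) := by
        funext Z; rw [← Real.exp_add]; ring_nf
      rwa [he] at h
    have hint : IntegrableOn
        (fun Z : ℝ => C * (Real.exp (b1 * (Y - Z)) + Real.exp (b2 * (Y - Z)))) (Ioi L) :=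
      (hint1.add hint2).const_mul C
    calc (∫⁻ Z in Set.Ioi L, ENNReal.ofReal (Real.exp ((Y - Z) / 2) * |W (Y - Z)|))
        ≤ ∫⁻ Z in Set.Ioi L,
            ENNReal.ofReal (C * (Real.exp (b1 * (Y - Z)) + Real.exp (b2 * (Y - Z)))) :=
          lintegral_mono fun Z => ENNReal.ofReal_le_ofReal (hpt (Y - Z))
      _ = ENNReal.ofReal (∫ Z in Set.Ioi L,
            C * (Real.exp (b1 * (Y - Z)) + Real.exp (b2 * (Y - Z)))) :=
          (ofReal_integral_eq_lintegral_ofReal hint (ae_of_all _ fun Z => by positivity)).symm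
      _ = ENNReal.ofReal (G Y) := by
          rw [MeasureTheory.integral_const_mul, integral_add hint1 hint2,
            aux_int_exp b1 Y L hb1, aux_int_exp b2 Y L hb2]
  have hG : IntegrableOn G (Iio (0:ℝ)) :=
    (((aux_key b1 hb1 hb1').div_const b1).add ((aux_key b2 hb2 hb2').div_const b2)).const_mul C
  calc (∫⁻ Y in Set.Iio (0 : ℝ), ∫⁻ Z in Set.Ioi (Real.log (1 - Real.exp Y)),
        ENNReal.ofReal (Real.exp ((Y - Z) / 2) * |W (Y - Z)|))
      ≤ ∫⁻ Y in Set.Iio (0 : ℝ), ENNReal.ofReal (G Y) := lintegral_mono fun Y => hinner Y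
    _ < ⊤ := hG.setLIntegral_lt_top
end

section
/- Let γ, p ∈ ℝ satisfy 0 ≤ γ + 2p and γ + 2p < 1, and let W : ℝ → ℝ be locally bounded and measurable with |W(Y)| ≤ C·e^{(γ/2+p)|Y|} for all Y ∈ ℝ. Then for all H₁, H₂ ∈ L^∞(ℝ) and all X ∈ ℝ, |B(H₁,H₂;W)(X)| ≤ C_W · ‖H₁‖_{L^∞(ℝ)} · ‖H₂‖_{L^∞(ℝ)}, where C_W := ∫_{−∞}^0 ∫_{log(1−e^Y)}^{∞} e^{(Y−Z)/2} |W(Y−Z)| dZ dY < ∞. -/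
open MeasureTheory Real Set
open scoped ENNReal NNReal

/-- The bilinear coagulation flux operator
`B(H₁,H₂;W)(X) = ∫_{−∞}^X ∫_{X+log(1−e^{Y−X})}^{∞} e^{(Y−Z)/2} W(Y−Z) H₁(Y) H₂(Z) dZ dY`. -/
noncomputable def coagB (W H₁ H₂ : ℝ → ℝ) (X : ℝ) : ℝ :=
  ∫ Y in Set.Iio X, ∫ Z in Set.Ioi (X + Real.log (1 - Real.exp (Y - X))),
    Real.exp ((Y - Z) / 2) * W (Y - Z) * H₁ Y * H₂ Z

/-- Translation invariance of the Lebesgue (lower) integral over a set. -/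
private lemma lintegral_shift (g : ℝ → ℝ≥0∞) (c : ℝ) (s t : Set ℝ)
    (hs : MeasurableSet s) (hst : (fun y : ℝ => y + c) ⁻¹' s = t) :
    ∫⁻ x in s, g x = ∫⁻ x in t, g (x + c) := by
  have he : MeasurableEmbedding (fun y : ℝ => y + c) := measurableEmbedding_addRight c
  conv_lhs => rw [← map_add_right_eq_self (volume : Measure ℝ) c]
  rw [he.restrict_map, he.lintegral_map, hst]

private lemma integrableOn_exp_mul_Iic' {t : ℝ} (ht : 0 < t) (a : ℝ) :
    IntegrableOn (fun Y : ℝ => Real.exp (t * Y)) (Iic a) := by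
  have h : IntegrableOn (fun x : ℝ => Real.exp (-t * x)) (Ioi (-a)) :=
    exp_neg_integrableOn_Ioi _ ht
  have he : MeasurableEmbedding (Neg.neg : ℝ → ℝ) := measurableEmbedding_neg
  have hmap : volume.restrict (Iic a) = Measure.map Neg.neg (volume.restrict (Ioi (-a))) := by
    have h1 := he.restrict_map (volume : Measure ℝ) (Iic a)
    rw [Measure.map_neg_eq_self] at h1
    rw [h1, show (Neg.neg : ℝ → ℝ) ⁻¹' Iic a = Ici (-a) by ext x; simp [neg_le],
      (Measure.restrict_congr_set (Ioi_ae_eq_Ici (a := -a))).symm]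
  show Integrable _ (volume.restrict (Iic a))
  rw [hmap, he.integrable_map_iff]
  simpa [Function.comp_def, mul_neg, neg_mul, IntegrableOn] using h

private lemma integrable_phi {t : ℝ} (ht0 : 0 < t) (ht1 : t < 1) :
    IntegrableOn (fun Y : ℝ => Real.exp (t * (Y - Real.log (1 - Real.exp Y)))) (Iio 0) := by
  have hmeas : Measurable fun Y : ℝ => Real.exp (t * (Y - Real.log (1 - Real.exp Y))) :=
    (measurable_const.mul (measurable_id.sub (measurable_const.sub Real.measurable_exp).log)).exp
  have h2 : (0:ℝ) < Real.log 2 := Real.log_pos (by norm_num)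
  have hsplit : Iio (0:ℝ) = Iic (-Real.log 2) ∪ Ioo (-Real.log 2) 0 := by
    ext x
    simp only [mem_Iio, mem_union, mem_Iic, mem_Ioo]
    constructor
    · intro hx
      rcases le_or_gt x (-Real.log 2) with h | h
      exacts [Or.inl h, Or.inr ⟨h, hx⟩]
    · rintro (h | ⟨_, h⟩)
      exacts [lt_of_le_of_lt h (by linarith), h]
  rw [hsplit]
  apply IntegrableOn.union
  · refine Integrable.mono'
      ((integrableOn_exp_mul_Iic' ht0 (-Real.log 2)).const_mul (Real.exp (t * Real.log 2)))
      hmeas.aestronglyMeasurable ?_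
    filter_upwards [ae_restrict_mem measurableSet_Iic] with Y hY
    have hE : Real.exp Y ≤ 1/2 := by
      have h : Real.exp Y ≤ Real.exp (-Real.log 2) := Real.exp_le_exp.2 hY
      rwa [Real.exp_neg, Real.exp_log (by norm_num : (0:ℝ) < 2), ← one_div] at h
    have h1 : (0:ℝ) < 1 - Real.exp Y := by linarith
    have hlog : -Real.log 2 ≤ Real.log (1 - Real.exp Y) := by
      rw [← Real.log_inv]
      exact Real.log_le_log (by norm_num) (by rw [show (2:ℝ)⁻¹ = 1/2 by norm_num]; linarith)
    rw [Real.norm_eq_abs, Real.abs_exp, ← Real.exp_add]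
    apply Real.exp_le_exp.2
    nlinarith [mul_le_mul_of_nonneg_left hlog ht0.le]
  · have hbase : IntervalIntegrable (fun x : ℝ => x ^ (-t)) volume 0 (Real.log 2) :=
      intervalIntegral.intervalIntegrable_rpow' (by linarith)
    have hneg : IntervalIntegrable (fun x : ℝ => (-x) ^ (-t)) volume 0 (-Real.log 2) := by
      have h := (IntervalIntegrable.iff_comp_neg (by simp)).mp hbase
      simpa using h
    have hpsi : IntegrableOn (fun Y : ℝ => (-Y) ^ (-t)) (Ioo (-Real.log 2) 0) :=
      hneg.2.mono_set Ioo_subset_Ioc_self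
    refine Integrable.mono' hpsi hmeas.aestronglyMeasurable ?_
    filter_upwards [ae_restrict_mem measurableSet_Ioo] with Y hY
    obtain ⟨hY1, hY2⟩ := hY
    have hYpos : 0 < -Y := by linarith
    have hkey : (-Y) * Real.exp Y ≤ 1 - Real.exp Y := by
      have h := Real.add_one_le_exp (-Y)
      have h2' := mul_le_mul_of_nonneg_right h (Real.exp_pos Y).le
      rw [← Real.exp_add] at h2'
      simp only [neg_add_cancel, Real.exp_zero] at h2'
      nlinarith
    have hpos2 : 0 < (-Y) * Real.exp Y := mul_pos hYpos (Real.exp_pos Y)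
    have hlog2 : Real.log ((-Y) * Real.exp Y) ≤ Real.log (1 - Real.exp Y) :=
      Real.log_le_log hpos2 hkey
    have hlogeq : Real.log ((-Y) * Real.exp Y) = Real.log (-Y) + Y := by
      rw [Real.log_mul (ne_of_gt hYpos) (Real.exp_pos Y).ne', Real.log_exp]
    rw [Real.norm_eq_abs, Real.abs_exp, Real.rpow_def_of_pos hYpos]
    apply Real.exp_le_exp.2
    have hle : Y - Real.log (1 - Real.exp Y) ≤ -Real.log (-Y) := by linarith
    calc t * (Y - Real.log (1 - Real.exp Y)) ≤ t * (-Real.log (-Y)) :=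
          mul_le_mul_of_nonneg_left hle ht0.le
      _ = Real.log (-Y) * (-t) := by ring

private lemma integral_exp_shift {c : ℝ} (hc : 0 < c) (Y L : ℝ) :
    IntegrableOn (fun Z : ℝ => Real.exp (c * (Y - Z))) (Ioi L) ∧
    (∫ Z in Ioi L, Real.exp (c * (Y - Z))) = Real.exp (c * (Y - L)) / c := by
  have hrw : ∀ Z : ℝ, Real.exp (c * (Y - Z)) = Real.exp (c * Y) * Real.exp (-(c * Z)) := by
    intro Z; rw [← Real.exp_add]; ring_nf
  constructor
  · have h := (exp_neg_integrableOn_Ioi L hc).const_mul (Real.exp (c * Y))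
    refine h.congr (Filter.Eventually.of_forall fun Z => ?_)
    simp only [neg_mul]
    exact (hrw Z).symm
  · simp_rw [hrw]
    rw [integral_const_mul]
    have h1 : (∫ Z in Ioi L, Real.exp (-(c * Z))) = c⁻¹ * Real.exp (-(c * L)) := by
      have h := MeasureTheory.integral_comp_mul_left_Ioi (fun x : ℝ => Real.exp (-x)) L hc
      rw [integral_exp_neg_Ioi] at h
      simpa [smul_eq_mul] using h
    rw [h1]
    field_simp

private lemma ae_abs_le (H : ℝ → ℝ) (hH : MemLp H ⊤ volume) :
    ∀ᵐ x ∂(volume : Measure ℝ), |H x| ≤ (eLpNorm H ⊤ volume).toReal := by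
  have hfin : eLpNorm H ⊤ volume ≠ ⊤ := hH.eLpNorm_lt_top.ne
  filter_upwards [ae_le_eLpNormEssSup (f := H) (μ := volume)] with x hx
  have h : ((‖H x‖₊ : ℝ≥0∞)).toReal ≤ (eLpNormEssSup H volume).toReal := by
    apply ENNReal.toReal_mono _ hx
    rwa [eLpNorm_exponent_top] at hfin
  rw [eLpNorm_exponent_top]
  simpa [Real.norm_eq_abs] using h

/-- for `0 ≤ γ+2p < 1` and locally bounded measurable `W` with
`|W(Y)| ≤ C e^{(γ/2+p)|Y|}`, the constant
`C_W = ∫_{−∞}^0 ∫_{log(1−e^Y)}^{∞} e^{(Y−Z)/2}|W(Y−Z)| dZ dY` is finite and for all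
`H₁, H₂ ∈ L^∞(ℝ)` and `X ∈ ℝ`,
`|B(H₁,H₂;W)(X)| ≤ C_W ‖H₁‖_{L^∞} ‖H₂‖_{L^∞}`. -/
theorem stmt_1 (γ p : ℝ) (h0 : 0 ≤ γ + 2 * p) (h1 : γ + 2 * p < 1)
    (W : ℝ → ℝ) (hWmeas : Measurable W)
    (hWloc : ∀ r : ℝ, ∃ M : ℝ, ∀ Y ∈ Set.Icc (-r) r, |W Y| ≤ M)
    (C : ℝ) (hW : ∀ Y : ℝ, |W Y| ≤ C * Real.exp ((γ / 2 + p) * |Y|))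
    (H₁ H₂ : ℝ → ℝ) (hH₁ : MemLp H₁ ⊤ volume) (hH₂ : MemLp H₂ ⊤ volume) :
    (∫⁻ Y in Set.Iio (0 : ℝ), ∫⁻ Z in Set.Ioi (Real.log (1 - Real.exp Y)),
        ENNReal.ofReal (Real.exp ((Y - Z) / 2) * |W (Y - Z)|)) < ⊤ ∧
    ∀ X : ℝ, |coagB W H₁ H₂ X| ≤
      (∫⁻ Y in Set.Iio (0 : ℝ), ∫⁻ Z in Set.Ioi (Real.log (1 - Real.exp Y)),
        ENNReal.ofReal (Real.exp ((Y - Z) / 2) * |W (Y - Z)|)).toReal *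
      (eLpNorm H₁ ⊤ volume).toReal * (eLpNorm H₂ ⊤ volume).toReal := by
  -- abbreviations
  set σ : ℝ := 1/2 + (γ / 2 + p) with hσdef
  set β : ℝ := 1/2 - (γ / 2 + p) with hβdef
  have hσ0 : 0 < σ := by rw [hσdef]; linarith
  have hσ1 : σ < 1 := by rw [hσdef]; linarith
  have hβ0 : 0 < β := by rw [hβdef]; linarith
  have hβ1 : β < 1 := by rw [hβdef]; linarith
  have hC : 0 ≤ C := by
    have h := (abs_nonneg (W 0)).trans (hW 0)
    nlinarith [Real.exp_pos ((γ / 2 + p) * |(0:ℝ)|)]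
  -- the key pointwise bound on the kernel
  have key : ∀ u : ℝ, Real.exp (u/2) * |W u| ≤ C * (Real.exp (σ * u) + Real.exp (β * u)) := by
    intro u
    have h2 : Real.exp (u/2) * |W u| ≤ C * Real.exp (u/2 + (γ / 2 + p) * |u|) := by
      calc Real.exp (u/2) * |W u|
          ≤ Real.exp (u/2) * (C * Real.exp ((γ / 2 + p) * |u|)) :=
            mul_le_mul_of_nonneg_left (hW u) (Real.exp_pos _).le
        _ = C * Real.exp (u/2 + (γ / 2 + p) * |u|) := by rw [Real.exp_add]; ring
    refine h2.trans (mul_le_mul_of_nonneg_left ?_ hC)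
    rcases le_or_gt 0 u with h | h
    · rw [abs_of_nonneg h, show u/2 + (γ / 2 + p) * u = σ * u by rw [hσdef]; ring]
      linarith [Real.exp_pos (β * u)]
    · rw [abs_of_neg h, show u/2 + (γ / 2 + p) * -u = β * u by rw [hβdef]; ring]
      linarith [Real.exp_pos (σ * u)]
  -- the dominating outer function
  set g : ℝ → ℝ := fun Y => C * (Real.exp (σ * (Y - Real.log (1 - Real.exp Y))) / σ +
      Real.exp (β * (Y - Real.log (1 - Real.exp Y))) / β) with hgdef
  have hg_nonneg : ∀ Y, 0 ≤ g Y := by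
    intro Y
    exact mul_nonneg hC (add_nonneg (div_nonneg (Real.exp_pos _).le hσ0.le)
      (div_nonneg (Real.exp_pos _).le hβ0.le))
  have hg_int : IntegrableOn g (Iio (0:ℝ)) :=
    (((integrable_phi hσ0 hσ1).div_const σ).add ((integrable_phi hβ0 hβ1).div_const β)).const_mul C
  -- the bound on the inner integral, valid for every real Y
  have hinner : ∀ Y : ℝ,
      (∫⁻ Z in Ioi (Real.log (1 - Real.exp Y)),
        ENNReal.ofReal (Real.exp ((Y - Z) / 2) * |W (Y - Z)|)) ≤ ENNReal.ofReal (g Y) := by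
    intro Y
    set L : ℝ := Real.log (1 - Real.exp Y) with hLdef
    have hint1 := integral_exp_shift hσ0 Y L
    have hint2 := integral_exp_shift hβ0 Y L
    have hintadd : IntegrableOn
        (fun Z : ℝ => C * (Real.exp (σ * (Y - Z)) + Real.exp (β * (Y - Z)))) (Ioi L) :=
      (hint1.1.add hint2.1).const_mul C
    calc (∫⁻ Z in Ioi L, ENNReal.ofReal (Real.exp ((Y - Z) / 2) * |W (Y - Z)|))
        ≤ ∫⁻ Z in Ioi L,
            ENNReal.ofReal (C * (Real.exp (σ * (Y - Z)) + Real.exp (β * (Y - Z)))) :=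
          lintegral_mono fun Z => ENNReal.ofReal_le_ofReal (key (Y - Z))
      _ = ENNReal.ofReal (∫ Z in Ioi L,
            C * (Real.exp (σ * (Y - Z)) + Real.exp (β * (Y - Z)))) := by
          refine (MeasureTheory.ofReal_integral_eq_lintegral_ofReal hintadd
            (Filter.Eventually.of_forall fun Z => ?_)).symm
          exact mul_nonneg hC (by positivity)
      _ = ENNReal.ofReal (g Y) := by
          rw [integral_const_mul, MeasureTheory.integral_add hint1.1 hint2.1,
            hint1.2, hint2.2, hgdef]
  -- finiteness
  have hfin : (∫⁻ Y in Set.Iio (0 : ℝ), ∫⁻ Z in Set.Ioi (Real.log (1 - Real.exp Y)),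
      ENNReal.ofReal (Real.exp ((Y - Z) / 2) * |W (Y - Z)|)) < ⊤ := by
    calc (∫⁻ Y in Set.Iio (0 : ℝ), ∫⁻ Z in Set.Ioi (Real.log (1 - Real.exp Y)),
        ENNReal.ofReal (Real.exp ((Y - Z) / 2) * |W (Y - Z)|))
        ≤ ∫⁻ Y in Set.Iio (0 : ℝ), ENNReal.ofReal (g Y) := lintegral_mono fun Y => hinner Y
      _ = ENNReal.ofReal (∫ Y in Iio (0:ℝ), g Y) :=
          (MeasureTheory.ofReal_integral_eq_lintegral_ofReal hg_int
            (Filter.Eventually.of_forall fun Y => hg_nonneg Y)).symm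
      _ < ⊤ := ENNReal.ofReal_lt_top
  refine ⟨hfin, ?_⟩
  -- the main bound
  intro X
  set D : ℝ≥0∞ := ∫⁻ Y in Set.Iio (0 : ℝ), ∫⁻ Z in Set.Ioi (Real.log (1 - Real.exp Y)),
      ENNReal.ofReal (Real.exp ((Y - Z) / 2) * |W (Y - Z)|) with hDdef
  set a : ℝ := (eLpNorm H₁ ⊤ volume).toReal with hadef
  set b : ℝ := (eLpNorm H₂ ⊤ volume).toReal with hbdef
  have ha0 : 0 ≤ a := ENNReal.toReal_nonneg
  have hb0 : 0 ≤ b := ENNReal.toReal_nonneg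
  have hae1 : ∀ᵐ Y ∂(volume : Measure ℝ), |H₁ Y| ≤ a := ae_abs_le H₁ hH₁
  have hae2 : ∀ᵐ Z ∂(volume : Measure ℝ), |H₂ Z| ≤ b := ae_abs_le H₂ hH₂
  -- translation invariance of the double integral
  have hDX : (∫⁻ Y in Iio X, ∫⁻ Z in Ioi (X + Real.log (1 - Real.exp (Y - X))),
      ENNReal.ofReal (Real.exp ((Y - Z) / 2) * |W (Y - Z)|)) = D := by
    rw [lintegral_shift (fun Y => ∫⁻ Z in Ioi (X + Real.log (1 - Real.exp (Y - X))),
        ENNReal.ofReal (Real.exp ((Y - Z) / 2) * |W (Y - Z)|)) X (Iio X) (Iio 0)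
        measurableSet_Iio (by ext x; simp)]
    refine lintegral_congr fun Y => ?_
    simp only [add_sub_cancel_right]
    rw [lintegral_shift (fun Z => ENNReal.ofReal (Real.exp ((Y + X - Z) / 2) * |W (Y + X - Z)|))
        X (Ioi (X + Real.log (1 - Real.exp Y))) (Ioi (Real.log (1 - Real.exp Y)))
        measurableSet_Ioi
        (by ext z; simp only [mem_preimage, mem_Ioi]; constructor <;> intro h <;> linarith)]
    refine lintegral_congr fun Z => ?_
    rw [show Y + X - (Z + X) = Y - Z by ring]
  -- step 1 : Bochner integral bounded by lower integral
  have hstep1 : |coagB W H₁ H₂ X| ≤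
      (∫⁻ Y in Iio X, ENNReal.ofReal
        ‖∫ Z in Ioi (X + Real.log (1 - Real.exp (Y - X))),
          Real.exp ((Y - Z) / 2) * W (Y - Z) * H₁ Y * H₂ Z‖).toReal := by
    rw [coagB, ← Real.norm_eq_abs]
    exact MeasureTheory.norm_integral_le_lintegral_norm _
  -- step 2 : bound the lower integral
  have hstep2 : (∫⁻ Y in Iio X, ENNReal.ofReal
      ‖∫ Z in Ioi (X + Real.log (1 - Real.exp (Y - X))),
        Real.exp ((Y - Z) / 2) * W (Y - Z) * H₁ Y * H₂ Z‖) ≤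
      (ENNReal.ofReal a * ENNReal.ofReal b) * D := by
    have hb' : ∀ᵐ Y ∂(volume.restrict (Iio X)), ENNReal.ofReal
        ‖∫ Z in Ioi (X + Real.log (1 - Real.exp (Y - X))),
          Real.exp ((Y - Z) / 2) * W (Y - Z) * H₁ Y * H₂ Z‖ ≤
        (ENNReal.ofReal a * ENNReal.ofReal b) *
          ∫⁻ Z in Ioi (X + Real.log (1 - Real.exp (Y - X))),
            ENNReal.ofReal (Real.exp ((Y - Z) / 2) * |W (Y - Z)|) := by
      filter_upwards [ae_restrict_of_ae hae1] with Y hY1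
      have h1 : ‖∫ Z in Ioi (X + Real.log (1 - Real.exp (Y - X))),
          Real.exp ((Y - Z) / 2) * W (Y - Z) * H₁ Y * H₂ Z‖ ≤
          (∫⁻ Z in Ioi (X + Real.log (1 - Real.exp (Y - X))), ENNReal.ofReal
            ‖Real.exp ((Y - Z) / 2) * W (Y - Z) * H₁ Y * H₂ Z‖).toReal :=
        MeasureTheory.norm_integral_le_lintegral_norm _
      have h2 : (∫⁻ Z in Ioi (X + Real.log (1 - Real.exp (Y - X))), ENNReal.ofReal
          ‖Real.exp ((Y - Z) / 2) * W (Y - Z) * H₁ Y * H₂ Z‖) ≤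
          (ENNReal.ofReal a * ENNReal.ofReal b) *
            ∫⁻ Z in Ioi (X + Real.log (1 - Real.exp (Y - X))),
              ENNReal.ofReal (Real.exp ((Y - Z) / 2) * |W (Y - Z)|) := by
        have hmono : ∀ᵐ Z ∂(volume.restrict (Ioi (X + Real.log (1 - Real.exp (Y - X))))),
            ENNReal.ofReal ‖Real.exp ((Y - Z) / 2) * W (Y - Z) * H₁ Y * H₂ Z‖ ≤
            (ENNReal.ofReal a * ENNReal.ofReal b) *
              ENNReal.ofReal (Real.exp ((Y - Z) / 2) * |W (Y - Z)|) := by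
          filter_upwards [ae_restrict_of_ae hae2] with Z hZ2
          rw [Real.norm_eq_abs, show |Real.exp ((Y - Z) / 2) * W (Y - Z) * H₁ Y * H₂ Z| =
            (Real.exp ((Y - Z) / 2) * |W (Y - Z)|) * |H₁ Y| * |H₂ Z| by
              rw [abs_mul, abs_mul, abs_mul, Real.abs_exp]]
          have hx : (0:ℝ) ≤ Real.exp ((Y - Z) / 2) * |W (Y - Z)| := by positivity
          have hstep : (Real.exp ((Y - Z) / 2) * |W (Y - Z)|) * |H₁ Y| * |H₂ Z| ≤
              (Real.exp ((Y - Z) / 2) * |W (Y - Z)|) * a * b := by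
            have hmul1 : (Real.exp ((Y - Z) / 2) * |W (Y - Z)|) * |H₁ Y| ≤
                (Real.exp ((Y - Z) / 2) * |W (Y - Z)|) * a :=
              mul_le_mul_of_nonneg_left hY1 hx
            exact mul_le_mul hmul1 hZ2 (abs_nonneg _) (mul_nonneg hx ha0)
          calc ENNReal.ofReal ((Real.exp ((Y - Z) / 2) * |W (Y - Z)|) * |H₁ Y| * |H₂ Z|)
              ≤ ENNReal.ofReal ((Real.exp ((Y - Z) / 2) * |W (Y - Z)|) * a * b) :=
                ENNReal.ofReal_le_ofReal hstep
            _ = (ENNReal.ofReal a * ENNReal.ofReal b) *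
                ENNReal.ofReal (Real.exp ((Y - Z) / 2) * |W (Y - Z)|) := by
                rw [ENNReal.ofReal_mul (mul_nonneg hx ha0), ENNReal.ofReal_mul hx]
                ring
        calc (∫⁻ Z in Ioi (X + Real.log (1 - Real.exp (Y - X))), ENNReal.ofReal
            ‖Real.exp ((Y - Z) / 2) * W (Y - Z) * H₁ Y * H₂ Z‖)
            ≤ ∫⁻ Z in Ioi (X + Real.log (1 - Real.exp (Y - X))),
              (ENNReal.ofReal a * ENNReal.ofReal b) *
                ENNReal.ofReal (Real.exp ((Y - Z) / 2) * |W (Y - Z)|) :=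
              lintegral_mono_ae hmono
          _ = (ENNReal.ofReal a * ENNReal.ofReal b) *
                ∫⁻ Z in Ioi (X + Real.log (1 - Real.exp (Y - X))),
                  ENNReal.ofReal (Real.exp ((Y - Z) / 2) * |W (Y - Z)|) :=
              lintegral_const_mul' _ _
                (ENNReal.mul_ne_top ENNReal.ofReal_ne_top ENNReal.ofReal_ne_top)
      calc ENNReal.ofReal ‖∫ Z in Ioi (X + Real.log (1 - Real.exp (Y - X))),
          Real.exp ((Y - Z) / 2) * W (Y - Z) * H₁ Y * H₂ Z‖
          ≤ ENNReal.ofReal ((∫⁻ Z in Ioi (X + Real.log (1 - Real.exp (Y - X))), ENNReal.ofReal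
            ‖Real.exp ((Y - Z) / 2) * W (Y - Z) * H₁ Y * H₂ Z‖).toReal) :=
            ENNReal.ofReal_le_ofReal h1
        _ ≤ ∫⁻ Z in Ioi (X + Real.log (1 - Real.exp (Y - X))), ENNReal.ofReal
            ‖Real.exp ((Y - Z) / 2) * W (Y - Z) * H₁ Y * H₂ Z‖ := ENNReal.ofReal_toReal_le
        _ ≤ _ := h2
    calc (∫⁻ Y in Iio X, ENNReal.ofReal
        ‖∫ Z in Ioi (X + Real.log (1 - Real.exp (Y - X))),
          Real.exp ((Y - Z) / 2) * W (Y - Z) * H₁ Y * H₂ Z‖)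
        ≤ ∫⁻ Y in Iio X, (ENNReal.ofReal a * ENNReal.ofReal b) *
            ∫⁻ Z in Ioi (X + Real.log (1 - Real.exp (Y - X))),
              ENNReal.ofReal (Real.exp ((Y - Z) / 2) * |W (Y - Z)|) := lintegral_mono_ae hb'
      _ = (ENNReal.ofReal a * ENNReal.ofReal b) *
            ∫⁻ Y in Iio X, ∫⁻ Z in Ioi (X + Real.log (1 - Real.exp (Y - X))),
              ENNReal.ofReal (Real.exp ((Y - Z) / 2) * |W (Y - Z)|) :=
          lintegral_const_mul' _ _
            (ENNReal.mul_ne_top ENNReal.ofReal_ne_top ENNReal.ofReal_ne_top)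
      _ = (ENNReal.ofReal a * ENNReal.ofReal b) * D := by rw [hDX]
  -- conclusion
  calc |coagB W H₁ H₂ X| ≤ _ := hstep1
    _ ≤ ((ENNReal.ofReal a * ENNReal.ofReal b) * D).toReal := by
        apply ENNReal.toReal_mono _ hstep2
        exact ENNReal.mul_ne_top
          (ENNReal.mul_ne_top ENNReal.ofReal_ne_top ENNReal.ofReal_ne_top) hfin.ne
    _ = D.toReal * a * b := by
        rw [ENNReal.toReal_mul, ENNReal.toReal_mul, ENNReal.toReal_ofReal ha0,
          ENNReal.toReal_ofReal hb0]
        ring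
end

section
/- Let γ, p ∈ ℝ with γ + 2p < 1 and let Φ : (0,1) → [0,∞) be measurable with Φ(s) ≤ c₂·s^{−p}(1−s)^{−p} for all s ∈ (0,1) and some constant c₂ > 0. Then the integral ∫₀¹ ∫_{1−y}^{∞} (y+z)^γ · y^{−(γ+1)/2} · z^{−(γ+3)/2} · Φ(y/(y+z)) dz dy is finite. -/
open MeasureTheory Real Set

lemma lint_Ioi_rpow (e : ℝ) (he : e < -1) (t : ℝ) (ht : 0 < t) :
    ∫⁻ z in Ioi t, ENNReal.ofReal (z ^ e) = ENNReal.ofReal (t ^ (e + 1) / (-(e + 1))) := by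
  rw [← ofReal_integral_eq_lintegral_ofReal (integrableOn_Ioi_rpow_of_lt he ht) ?_]
  · rw [integral_Ioi_rpow_of_lt he ht]
    congr 1
    rw [div_neg, neg_div]
  · filter_upwards [ae_restrict_mem measurableSet_Ioi] with x hx
    exact rpow_nonneg (le_of_lt (ht.trans hx)) e

lemma lint_beta (u w : ℝ) (hu : -1 < u) (hw : -1 < w) :
    ∫⁻ y in Ioo (0 : ℝ) 1, ENNReal.ofReal (y ^ u * (1 - y) ^ w) < ⊤ := by
  have h1 : IntervalIntegrable (fun y : ℝ => y ^ u * (1 - y) ^ w) volume 0 (1 / 2) := by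
    apply IntervalIntegrable.mul_continuousOn (intervalIntegral.intervalIntegrable_rpow' hu)
    apply ContinuousOn.rpow_const (continuous_const.sub continuous_id).continuousOn
    intro x hx
    rw [uIcc_of_le (by norm_num)] at hx
    left
    have := hx.2
    simp only [Pi.sub_apply, id_eq]
    intro h
    linarith
  have h2 : IntervalIntegrable (fun y : ℝ => y ^ u * (1 - y) ^ w) volume (1 / 2) 1 := by
    apply IntervalIntegrable.continuousOn_mul
    · have := (intervalIntegral.intervalIntegrable_rpow' hw (a := 1/2) (b := 0)).comp_sub_left 1
      norm_num at this
      exact this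
    · apply ContinuousOn.rpow_const continuousOn_id
      intro x hx
      rw [uIcc_of_le (by norm_num)] at hx
      left
      have := hx.1
      simp only [id_eq]
      intro h
      rw [h] at this
      norm_num at this
  have h := h1.trans h2
  rw [intervalIntegrable_iff_integrableOn_Ioo_of_le (by norm_num)] at h
  have nn : 0 ≤ᵐ[volume.restrict (Ioo (0:ℝ) 1)] fun y : ℝ => y ^ u * (1 - y) ^ w := by
    filter_upwards [ae_restrict_mem measurableSet_Ioo] with x hx
    exact mul_nonneg (rpow_nonneg hx.1.le _) (rpow_nonneg (by linarith [hx.2]) _)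
  exact (hasFiniteIntegral_iff_ofReal nn).mp h.2

lemma key_bound (γ p c₂ : ℝ) (Φ : ℝ → ℝ) (hc₂ : 0 < c₂)
    (hΦub : ∀ s ∈ Set.Ioo (0 : ℝ) 1, Φ s ≤ c₂ * s ^ (-p) * (1 - s) ^ (-p))
    (y z : ℝ) (hy0 : 0 < y) (hy1 : y < 1) (hz : 1 - y < z) :
    (y + z) ^ γ * y ^ (-((γ + 1) / 2)) * z ^ (-((γ + 3) / 2)) * Φ (y / (y + z)) ≤
      c₂ * 2 ^ |γ + 2 * p| * y ^ (-((γ + 2 * p + 1) / 2)) *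
        ((max z 1) ^ (γ + 2 * p) * z ^ (-((γ + 2 * p + 3) / 2))) := by
  have hz0 : 0 < z := lt_trans (by linarith) hz
  have hyz0 : (0 : ℝ) < y + z := by linarith
  have hyz1 : (1 : ℝ) < y + z := by linarith
  have hs : y / (y + z) ∈ Set.Ioo (0 : ℝ) 1 :=
    ⟨div_pos hy0 hyz0, (div_lt_one hyz0).2 (by linarith)⟩
  have h1s : 1 - y / (y + z) = z / (y + z) := by field_simp; ring
  have hppos : (0:ℝ) < (y + z) ^ p := rpow_pos_of_pos hyz0 p
  -- bound Φ
  have hΦ : Φ (y / (y + z)) ≤ c₂ * (y ^ (-p) * z ^ (-p) * (y + z) ^ (2 * p)) := by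
    have h := hΦub _ hs
    rw [h1s, div_rpow hy0.le hyz0.le, div_rpow hz0.le hyz0.le] at h
    have e1 : (y + z) ^ (-p) = ((y + z) ^ p)⁻¹ := rpow_neg hyz0.le p
    have e2 : (y + z) ^ (2 * p) = (y + z) ^ p * (y + z) ^ p := by
      rw [← rpow_add hyz0]; ring_nf
    calc Φ (y / (y + z)) ≤ c₂ * (y ^ (-p) / (y + z) ^ (-p)) * (z ^ (-p) / (y + z) ^ (-p)) := h
      _ = c₂ * (y ^ (-p) * z ^ (-p) * (y + z) ^ (2 * p)) := by
          rw [e1, e2]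
          field_simp
  -- step 1: multiply by nonneg prefactor
  have hA : (0:ℝ) ≤ (y + z) ^ γ * y ^ (-((γ + 1) / 2)) * z ^ (-((γ + 3) / 2)) := by positivity
  have step1 : (y + z) ^ γ * y ^ (-((γ + 1) / 2)) * z ^ (-((γ + 3) / 2)) * Φ (y / (y + z)) ≤
      c₂ * ((y + z) ^ (γ + 2 * p) *
        (y ^ (-((γ + 2 * p + 1) / 2)) * z ^ (-((γ + 2 * p + 3) / 2)))) := by
    have := mul_le_mul_of_nonneg_left hΦ hA
    refine this.trans (le_of_eq ?_)
    have ey : y ^ (-((γ + 2 * p + 1) / 2)) = y ^ (-((γ + 1) / 2)) * y ^ (-p) := by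
      rw [← rpow_add hy0]; ring_nf
    have ez : z ^ (-((γ + 2 * p + 3) / 2)) = z ^ (-((γ + 3) / 2)) * z ^ (-p) := by
      rw [← rpow_add hz0]; ring_nf
    have eyz : (y + z) ^ (γ + 2 * p) = (y + z) ^ γ * (y + z) ^ (2 * p) := rpow_add hyz0 _ _
    rw [ey, ez, eyz]; ring
  -- step 2: bound (y+z)^(γ+2p)
  have hmax1 : (1:ℝ) ≤ max z 1 := le_max_right _ _
  have hmax0 : (0:ℝ) < max z 1 := by linarith
  have hbd : (y + z) ^ (γ + 2 * p) ≤ 2 ^ |γ + 2 * p| * (max z 1) ^ (γ + 2 * p) := by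
    rcases le_or_gt (γ + 2 * p) 0 with hA2 | hA2
    · have hlb : max z 1 ≤ y + z := max_le (by linarith) (by linarith)
      have h1 : (y + z) ^ (γ + 2 * p) ≤ (max z 1) ^ (γ + 2 * p) :=
        rpow_le_rpow_of_nonpos hmax0 hlb hA2
      have h2 : (1:ℝ) ≤ 2 ^ |γ + 2 * p| := one_le_rpow (by norm_num) (abs_nonneg _)
      nlinarith [rpow_pos_of_pos hmax0 (γ + 2 * p)]
    · have hub : y + z ≤ 2 * max z 1 := by
        have := le_max_left z 1
        linarith
      calc (y + z) ^ (γ + 2 * p) ≤ (2 * max z 1) ^ (γ + 2 * p) :=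
            rpow_le_rpow hyz0.le hub hA2.le
        _ = 2 ^ (γ + 2 * p) * (max z 1) ^ (γ + 2 * p) := mul_rpow (by norm_num) hmax0.le
        _ = 2 ^ |γ + 2 * p| * (max z 1) ^ (γ + 2 * p) := by rw [abs_of_pos hA2]
  refine step1.trans ?_
  have hy' : (0:ℝ) ≤ y ^ (-((γ + 2 * p + 1) / 2)) := rpow_nonneg hy0.le _
  have hz' : (0:ℝ) ≤ z ^ (-((γ + 2 * p + 3) / 2)) := rpow_nonneg hz0.le _
  calc c₂ * ((y + z) ^ (γ + 2 * p) *
        (y ^ (-((γ + 2 * p + 1) / 2)) * z ^ (-((γ + 2 * p + 3) / 2))))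
      ≤ c₂ * ((2 ^ |γ + 2 * p| * (max z 1) ^ (γ + 2 * p)) *
        (y ^ (-((γ + 2 * p + 1) / 2)) * z ^ (-((γ + 2 * p + 3) / 2)))) := by
        apply mul_le_mul_of_nonneg_left _ hc₂.le
        exact mul_le_mul_of_nonneg_right hbd (mul_nonneg hy' hz')
    _ = c₂ * 2 ^ |γ + 2 * p| * y ^ (-((γ + 2 * p + 1) / 2)) *
        ((max z 1) ^ (γ + 2 * p) * z ^ (-((γ + 2 * p + 3) / 2))) := by ring

lemma step2 (a : ℝ) (ha : a < 1) (y : ℝ) (hy0 : 0 < y) (hy1 : y < 1)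
    (M : ℝ) (hM : 0 ≤ M) :
    (∫⁻ z in Ioi (1 - y),
        ENNReal.ofReal (M * ((max z 1) ^ a * z ^ (-((a + 3) / 2))))) ≤
      ENNReal.ofReal (M * ((1 - y) ^ (min (-((a + 3) / 2)) (-(3 / 2 : ℝ)) + 1) *
        (1 / (-(min (-((a + 3) / 2)) (-(3 / 2 : ℝ)) + 1)) + 1 / (-((a - 3) / 2 + 1))))) := by
  have h1y : 0 < 1 - y := by linarith
  set q := min (-((a + 3) / 2)) (-(3 / 2 : ℝ)) with hq
  have hql : q < -1 := lt_of_le_of_lt (min_le_right _ _) (by norm_num)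
  have hqg : -2 < q := lt_min (by linarith) (by norm_num)
  have hr : (a - 3) / 2 < -1 := by linarith
  have hc1 : (0:ℝ) < -(q + 1) := by linarith
  have hc2 : (0:ℝ) < -((a - 3) / 2 + 1) := by linarith
  rw [← Ioc_union_Ioi_eq_Ioi (by linarith : 1 - y ≤ 1)]
  refine (lintegral_union_le _ _ _).trans ?_
  have p1 : (∫⁻ z in Ioc (1 - y) 1,
      ENNReal.ofReal (M * ((max z 1) ^ a * z ^ (-((a + 3) / 2))))) ≤
      ENNReal.ofReal M * ENNReal.ofReal ((1 - y) ^ (q + 1) / (-(q + 1))) := by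
    rw [← lint_Ioi_rpow q hql (1 - y) h1y]
    calc (∫⁻ z in Ioc (1 - y) 1,
        ENNReal.ofReal (M * ((max z 1) ^ a * z ^ (-((a + 3) / 2)))))
        ≤ ∫⁻ z in Ioc (1 - y) 1, ENNReal.ofReal M * ENNReal.ofReal (z ^ q) := by
          apply setLIntegral_mono' measurableSet_Ioc
          intro z hz
          rw [← ENNReal.ofReal_mul hM]
          apply ENNReal.ofReal_le_ofReal
          have hz0 : 0 < z := lt_trans h1y hz.1
          rw [max_eq_right hz.2, one_rpow, one_mul]
          exact mul_le_mul_of_nonneg_left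
            (rpow_le_rpow_of_exponent_ge hz0 hz.2 (min_le_left _ _)) hM
      _ ≤ ∫⁻ z in Ioi (1 - y), ENNReal.ofReal M * ENNReal.ofReal (z ^ q) :=
          lintegral_mono_set Ioc_subset_Ioi_self
      _ = ENNReal.ofReal M * ∫⁻ z in Ioi (1 - y), ENNReal.ofReal (z ^ q) :=
          lintegral_const_mul' _ _ ENNReal.ofReal_ne_top
  have p2 : (∫⁻ z in Ioi (1:ℝ),
      ENNReal.ofReal (M * ((max z 1) ^ a * z ^ (-((a + 3) / 2))))) ≤
      ENNReal.ofReal M * ENNReal.ofReal (1 / (-((a - 3) / 2 + 1))) := by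
    have hform := lint_Ioi_rpow ((a - 3) / 2) hr 1 one_pos
    rw [one_rpow] at hform
    rw [← hform]
    calc (∫⁻ z in Ioi (1:ℝ),
        ENNReal.ofReal (M * ((max z 1) ^ a * z ^ (-((a + 3) / 2)))))
        ≤ ∫⁻ z in Ioi (1:ℝ), ENNReal.ofReal M * ENNReal.ofReal (z ^ ((a - 3) / 2)) := by
          apply setLIntegral_mono' measurableSet_Ioi
          intro z hz
          rw [← ENNReal.ofReal_mul hM]
          apply ENNReal.ofReal_le_ofReal
          have hz0 : (0:ℝ) < z := lt_trans one_pos hz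
          rw [max_eq_left (le_of_lt hz), ← rpow_add hz0,
            show a + -((a + 3) / 2) = (a - 3) / 2 by ring]
      _ = ENNReal.ofReal M * ∫⁻ z in Ioi (1:ℝ), ENNReal.ofReal (z ^ ((a - 3) / 2)) :=
          lintegral_const_mul' _ _ ENNReal.ofReal_ne_top
  refine (add_le_add p1 p2).trans ?_
  rw [← mul_add, ← ENNReal.ofReal_add (by positivity) (by positivity),
    ← ENNReal.ofReal_mul hM]
  apply ENNReal.ofReal_le_ofReal
  apply mul_le_mul_of_nonneg_left _ hM
  have h1 : 1 ≤ (1 - y) ^ (q + 1) :=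
    one_le_rpow_of_pos_of_le_one_of_nonpos h1y (by linarith) (by linarith)
  have hB : (0:ℝ) ≤ 1 / (-((a - 3) / 2 + 1)) := by positivity
  rw [div_eq_mul_one_div, mul_add]
  exact add_le_add_right (le_mul_of_one_le_left hB h1) _


/-- for `γ + 2p < 1` and measurable `Φ : (0,1) → [0,∞)` with
`Φ(s) ≤ c₂ s^{−p} (1−s)^{−p}`, the integral
`∫₀¹ ∫_{1−y}^{∞} (y+z)^γ y^{−(γ+1)/2} z^{−(γ+3)/2} Φ(y/(y+z)) dz dy` is finite. -/
theorem stmt_2 (γ p : ℝ) (h1 : γ + 2 * p < 1)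
    (Φ : ℝ → ℝ) (hΦmeas : Measurable Φ)
    (hΦnn : ∀ s ∈ Set.Ioo (0 : ℝ) 1, 0 ≤ Φ s)
    (c₂ : ℝ) (hc₂ : 0 < c₂)
    (hΦub : ∀ s ∈ Set.Ioo (0 : ℝ) 1, Φ s ≤ c₂ * s ^ (-p) * (1 - s) ^ (-p)) :
    (∫⁻ y in Set.Ioo (0 : ℝ) 1, ∫⁻ z in Set.Ioi (1 - y),
        ENNReal.ofReal ((y + z) ^ γ * y ^ (-((γ + 1) / 2)) * z ^ (-((γ + 3) / 2)) *
          Φ (y / (y + z)))) < ⊤ := by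
  have hq : min (-((γ + 2 * p + 3) / 2)) (-(3 / 2 : ℝ)) < -1 :=
    lt_of_le_of_lt (min_le_right _ _) (by norm_num)
  have hqg : -2 < min (-((γ + 2 * p + 3) / 2)) (-(3 / 2 : ℝ)) :=
    lt_min (by linarith) (by norm_num)
  set C := 1 / (-(min (-((γ + 2 * p + 3) / 2)) (-(3 / 2 : ℝ)) + 1)) +
      1 / (-((γ + 2 * p - 3) / 2 + 1)) with hC_def
  have hC : 0 ≤ C := by
    rw [hC_def]
    have : (0:ℝ) < -(min (-((γ + 2 * p + 3) / 2)) (-(3 / 2 : ℝ)) + 1) := by linarith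
    have h2 : (0:ℝ) < -((γ + 2 * p - 3) / 2 + 1) := by linarith
    positivity
  have hKC : 0 ≤ c₂ * 2 ^ |γ + 2 * p| * C := by positivity
  calc (∫⁻ y in Set.Ioo (0 : ℝ) 1, ∫⁻ z in Set.Ioi (1 - y),
        ENNReal.ofReal ((y + z) ^ γ * y ^ (-((γ + 1) / 2)) * z ^ (-((γ + 3) / 2)) *
          Φ (y / (y + z))))
      ≤ ∫⁻ y in Set.Ioo (0 : ℝ) 1,
        ENNReal.ofReal ((c₂ * 2 ^ |γ + 2 * p| * C) *
          (y ^ (-((γ + 2 * p + 1) / 2)) *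
            (1 - y) ^ (min (-((γ + 2 * p + 3) / 2)) (-(3 / 2 : ℝ)) + 1))) := by
        apply setLIntegral_mono' measurableSet_Ioo
        intro y hy
        have hM : 0 ≤ c₂ * 2 ^ |γ + 2 * p| * y ^ (-((γ + 2 * p + 1) / 2)) :=
          mul_nonneg (by positivity) (rpow_nonneg hy.1.le _)
        calc (∫⁻ z in Set.Ioi (1 - y),
            ENNReal.ofReal ((y + z) ^ γ * y ^ (-((γ + 1) / 2)) * z ^ (-((γ + 3) / 2)) *
              Φ (y / (y + z))))
            ≤ ∫⁻ z in Set.Ioi (1 - y),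
              ENNReal.ofReal ((c₂ * 2 ^ |γ + 2 * p| * y ^ (-((γ + 2 * p + 1) / 2))) *
                ((max z 1) ^ (γ + 2 * p) * z ^ (-((γ + 2 * p + 3) / 2)))) := by
              apply setLIntegral_mono' measurableSet_Ioi
              intro z hz
              exact ENNReal.ofReal_le_ofReal
                (key_bound γ p c₂ Φ hc₂ hΦub y z hy.1 hy.2 hz)
          _ ≤ ENNReal.ofReal ((c₂ * 2 ^ |γ + 2 * p| * y ^ (-((γ + 2 * p + 1) / 2))) *
                ((1 - y) ^ (min (-((γ + 2 * p + 3) / 2)) (-(3 / 2 : ℝ)) + 1) *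
                  (1 / (-(min (-((γ + 2 * p + 3) / 2)) (-(3 / 2 : ℝ)) + 1)) +
                    1 / (-((γ + 2 * p - 3) / 2 + 1))))) := by
              have := step2 (γ + 2 * p) h1 y hy.1 hy.2
                (c₂ * 2 ^ |γ + 2 * p| * y ^ (-((γ + 2 * p + 1) / 2))) hM
              convert this using 4 <;> ring
          _ = ENNReal.ofReal ((c₂ * 2 ^ |γ + 2 * p| * C) *
                (y ^ (-((γ + 2 * p + 1) / 2)) *
                  (1 - y) ^ (min (-((γ + 2 * p + 3) / 2)) (-(3 / 2 : ℝ)) + 1))) := by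
              rw [hC_def]; congr 1; ring
    _ < ⊤ := by
        simp_rw [ENNReal.ofReal_mul hKC]
        rw [lintegral_const_mul' _ _ ENNReal.ofReal_ne_top]
        exact ENNReal.mul_lt_top ENNReal.ofReal_lt_top
          (lint_beta _ _ (by linarith) (by linarith))
end

section
/- Let γ, p ∈ ℝ with γ + 2p < 1, let Φ : (0,1) → (0,∞) be measurable with c₁·s^{−p}(1−s)^{−p} ≤ Φ(s) ≤ c₂·s^{−p}(1−s)^{−p} for all s ∈ (0,1) and some constants 0 < c₁ ≤ c₂ < ∞, and set K(x,y) = (x+y)^γ Φ(x/(x+y)) for x,y > 0. Let J₀ > 0, let b_{Φ,γ} = (∫₀¹ ∫_{1−y}^{∞} (y+z)^γ y^{−(γ+1)/2} z^{−(γ+3)/2} Φ(y/(y+z)) dz dy)^{−1/2}, and define f(x) = b_{Φ,γ}·√J₀·x^{−(γ+3)/2}. Then J(x;f) = J₀ for every x > 0. -/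
open MeasureTheory Real Set

/-- The mass flux `J(x;f) = ∫₀^x ∫_{x−y}^{∞} K(y,z) y f(y) f(z) dz dy`. -/
noncomputable def coagJ (K : ℝ → ℝ → ℝ) (f : ℝ → ℝ) (x : ℝ) : ℝ :=
  ∫ y in Set.Ioo 0 x, ∫ z in Set.Ioi (x - y), K y z * y * f y * f z


noncomputable def gfun (γ : ℝ) (Φ : ℝ → ℝ) (y z : ℝ) : ℝ :=
  (y + z) ^ γ * y ^ (-((γ + 1) / 2)) * z ^ (-((γ + 3) / 2)) * Φ (y / (y + z))

lemma gfun_meas (γ : ℝ) (Φ : ℝ → ℝ) (hΦ : Measurable Φ) :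
    Measurable (fun q : ℝ × ℝ => gfun γ Φ q.1 q.2) := by
  unfold gfun; fun_prop

lemma min_rpow_le {r r₁ r₂ : ℝ} (e : ℝ) (h0 : 0 < r₁) (h1 : r₁ ≤ r) (h2 : r ≤ r₂) :
    min (r₁ ^ e) (r₂ ^ e) ≤ r ^ e := by
  rcases le_or_gt 0 e with he | he
  · exact le_trans (min_le_left _ _) (Real.rpow_le_rpow h0.le h1 he)
  · exact le_trans (min_le_right _ _) (Real.rpow_le_rpow_of_nonpos (h0.trans_le h1) h2 he.le)

lemma rpow_le_max {r r₁ r₂ : ℝ} (e : ℝ) (h0 : 0 < r₁) (h1 : r₁ ≤ r) (h2 : r ≤ r₂) :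
    r ^ e ≤ max (r₁ ^ e) (r₂ ^ e) := by
  rcases le_or_gt 0 e with he | he
  · exact le_trans (Real.rpow_le_rpow (h0.le.trans h1) h2 he) (le_max_right _ _)
  · exact le_trans (Real.rpow_le_rpow_of_nonpos h0 h1 he.le) (le_max_left _ _)

lemma prefactor_eq (γ p : ℝ) {y z : ℝ} (hy : 0 < y) (hz : 0 < z) (c : ℝ) :
    (y + z) ^ γ * y ^ (-((γ + 1) / 2)) * z ^ (-((γ + 3) / 2)) *
      (c * (y / (y + z)) ^ (-p) * (z / (y + z)) ^ (-p))
    = c * ((y + z) ^ (γ + 2 * p) *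
        (y ^ (-((γ + 2 * p + 1) / 2)) * z ^ (-((γ + 2 * p + 1) / 2 + 1)))) := by
  have hyz : (0:ℝ) < y + z := by linarith
  have e1 : (y / (y + z)) ^ (-p) = y ^ (-p) * (y + z) ^ p := by
    rw [Real.div_rpow hy.le hyz.le, Real.rpow_neg hyz.le]; field_simp
  have e2 : (z / (y + z)) ^ (-p) = z ^ (-p) * (y + z) ^ p := by
    rw [Real.div_rpow hz.le hyz.le, Real.rpow_neg hyz.le]; field_simp
  rw [e1, e2]
  calc (y + z) ^ γ * y ^ (-((γ + 1) / 2)) * z ^ (-((γ + 3) / 2)) *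
      (c * (y ^ (-p) * (y + z) ^ p) * (z ^ (-p) * (y + z) ^ p))
      = c * (((y + z) ^ γ * (y + z) ^ p * (y + z) ^ p) *
          ((y ^ (-((γ + 1) / 2)) * y ^ (-p)) * (z ^ (-((γ + 3) / 2)) * z ^ (-p)))) := by ring
    _ = c * ((y + z) ^ (γ + p + p) *
          (y ^ (-((γ + 1) / 2) + -p) * z ^ (-((γ + 3) / 2) + -p))) := by
        rw [← Real.rpow_add hyz, ← Real.rpow_add hyz, ← Real.rpow_add hy, ← Real.rpow_add hz]
    _ = _ := by
        rw [show γ + p + p = γ + 2 * p by ring,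
          show -((γ + 1) / 2) + -p = -((γ + 2 * p + 1) / 2) by ring,
          show -((γ + 3) / 2) + -p = -((γ + 2 * p + 1) / 2 + 1) by ring]

lemma gfun_scale (γ : ℝ) (Φ : ℝ → ℝ) {x u w : ℝ} (hx : 0 < x) (hu : 0 < u) (hw : 0 < w) :
    gfun γ Φ (x * u) (x * w) = x ^ (-(2:ℝ)) * gfun γ Φ u w := by
  unfold gfun
  have huw : (0:ℝ) < u + w := by linarith
  have h1 : x * u + x * w = x * (u + w) := by ring
  have h2 : x * u / (x * (u + w)) = u / (u + w) := mul_div_mul_left _ _ hx.ne'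
  rw [h1, h2, Real.mul_rpow hx.le huw.le, Real.mul_rpow hx.le hu.le, Real.mul_rpow hx.le hw.le]
  have : x ^ γ * x ^ (-((γ + 1) / 2)) * x ^ (-((γ + 3) / 2)) = x ^ (-(2:ℝ)) := by
    rw [← Real.rpow_add hx, ← Real.rpow_add hx,
      show γ + -((γ + 1) / 2) + -((γ + 3) / 2) = -(2:ℝ) by ring]
  calc x ^ γ * (u + w) ^ γ * (x ^ (-((γ + 1) / 2)) * u ^ (-((γ + 1) / 2))) *
        (x ^ (-((γ + 3) / 2)) * w ^ (-((γ + 3) / 2))) * Φ (u / (u + w))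
      = (x ^ γ * x ^ (-((γ + 1) / 2)) * x ^ (-((γ + 3) / 2))) *
        ((u + w) ^ γ * u ^ (-((γ + 1) / 2)) * w ^ (-((γ + 3) / 2)) * Φ (u / (u + w))) := by ring
    _ = _ := by rw [this]

lemma gfun_sandwich (γ p : ℝ) (Φ : ℝ → ℝ) (c₁ c₂ : ℝ)
    (hΦlb : ∀ s ∈ Set.Ioo (0 : ℝ) 1, c₁ * s ^ (-p) * (1 - s) ^ (-p) ≤ Φ s)
    (hΦub : ∀ s ∈ Set.Ioo (0 : ℝ) 1, Φ s ≤ c₂ * s ^ (-p) * (1 - s) ^ (-p))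
    {y z : ℝ} (hy : 0 < y) (hz : 0 < z) :
    c₁ * ((y + z) ^ (γ + 2 * p) *
        (y ^ (-((γ + 2 * p + 1) / 2)) * z ^ (-((γ + 2 * p + 1) / 2 + 1)))) ≤ gfun γ Φ y z ∧
    gfun γ Φ y z ≤ c₂ * ((y + z) ^ (γ + 2 * p) *
        (y ^ (-((γ + 2 * p + 1) / 2)) * z ^ (-((γ + 2 * p + 1) / 2 + 1)))) := by
  have hyz : (0:ℝ) < y + z := by linarith
  have hs : y / (y + z) ∈ Set.Ioo (0:ℝ) 1 :=
    ⟨div_pos hy hyz, (div_lt_one hyz).2 (by linarith)⟩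
  have h1s : 1 - y / (y + z) = z / (y + z) := by field_simp; ring
  have hP : 0 ≤ (y + z) ^ γ * y ^ (-((γ + 1) / 2)) * z ^ (-((γ + 3) / 2)) := by positivity
  have hgdef : gfun γ Φ y z = (y + z) ^ γ * y ^ (-((γ + 1) / 2)) * z ^ (-((γ + 3) / 2)) *
      Φ (y / (y + z)) := rfl
  constructor
  · have h := hΦlb _ hs
    rw [h1s] at h
    calc c₁ * ((y + z) ^ (γ + 2 * p) *
          (y ^ (-((γ + 2 * p + 1) / 2)) * z ^ (-((γ + 2 * p + 1) / 2 + 1))))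
        = (y + z) ^ γ * y ^ (-((γ + 1) / 2)) * z ^ (-((γ + 3) / 2)) *
          (c₁ * (y / (y + z)) ^ (-p) * (z / (y + z)) ^ (-p)) := (prefactor_eq γ p hy hz c₁).symm
      _ ≤ (y + z) ^ γ * y ^ (-((γ + 1) / 2)) * z ^ (-((γ + 3) / 2)) * Φ (y / (y + z)) := by
          exact mul_le_mul_of_nonneg_left h hP
      _ = gfun γ Φ y z := hgdef.symm
  · have h := hΦub _ hs
    rw [h1s] at h
    calc gfun γ Φ y z
        = (y + z) ^ γ * y ^ (-((γ + 1) / 2)) * z ^ (-((γ + 3) / 2)) * Φ (y / (y + z)) := hgdef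
      _ ≤ (y + z) ^ γ * y ^ (-((γ + 1) / 2)) * z ^ (-((γ + 3) / 2)) *
          (c₂ * (y / (y + z)) ^ (-p) * (z / (y + z)) ^ (-p)) := mul_le_mul_of_nonneg_left h hP
      _ = _ := prefactor_eq γ p hy hz c₂

lemma betaInt {s t : ℝ} (hs : s < 1) (ht : t < 1) :
    IntegrableOn (fun y : ℝ => y ^ (-s) * (1 - y) ^ (-t)) (Ioo 0 1) := by
  have hu : 0 < Complex.re ((1 - s : ℝ) : ℂ) := by simp; linarith
  have hv : 0 < Complex.re ((1 - t : ℝ) : ℂ) := by simp; linarith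
  have h := (Complex.betaIntegral_convergent hu hv).norm
  have h3 : IntegrableOn
      (fun x : ℝ => ‖(x : ℂ) ^ (((1 - s : ℝ) : ℂ) - 1) * (1 - (x : ℂ)) ^ (((1 - t : ℝ) : ℂ) - 1)‖)
      (Ioc (0:ℝ) 1) := h.1
  refine IntegrableOn.congr_fun (h3.mono_set Ioo_subset_Ioc_self) (fun x hx => ?_) measurableSet_Ioo
  have hx0 : 0 < x := hx.1
  have hx1 : 0 < 1 - x := by have := hx.2; linarith
  rw [norm_mul,
    show (1 - (x:ℂ)) = ((1 - x : ℝ) : ℂ) by push_cast; ring,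
    Complex.norm_cpow_eq_rpow_re_of_pos hx0, Complex.norm_cpow_eq_rpow_re_of_pos hx1]
  norm_num
lemma Ipos (γ p : ℝ) (h1 : γ + 2 * p < 1) (Φ : ℝ → ℝ) (hΦmeas : Measurable Φ)
    (c₁ c₂ : ℝ) (hc₁ : 0 < c₁) (hc₁₂ : c₁ ≤ c₂)
    (hΦlb : ∀ s ∈ Set.Ioo (0 : ℝ) 1, c₁ * s ^ (-p) * (1 - s) ^ (-p) ≤ Φ s)
    (hΦub : ∀ s ∈ Set.Ioo (0 : ℝ) 1, Φ s ≤ c₂ * s ^ (-p) * (1 - s) ^ (-p)) :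
    0 < ∫ y in Ioo (0:ℝ) 1, ∫ z in Ioi (1 - y), gfun γ Φ y z := by
  have hc₂ : 0 < c₂ := lt_of_lt_of_le hc₁ hc₁₂
  set a : ℝ := γ + 2 * p with hadef
  set α : ℝ := (γ + 2 * p + 1) / 2 with hαdef
  set α' : ℝ := max α (1/2) with hα'def
  have ha1 : a < 1 := h1
  have hα1 : α < 1 := by rw [hαdef]; linarith
  have hα'pos : (0:ℝ) < α' := lt_of_lt_of_le (by norm_num) (le_max_right _ _)
  have hα'1 : α' < 1 := max_lt hα1 (by norm_num)
  have hαα' : α ≤ α' := le_max_left _ _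
  set C : ℝ := c₂ * max 1 ((2:ℝ) ^ a) with hCdef
  have hCpos : 0 < C := by
    rw [hCdef]; apply mul_pos hc₂ (lt_of_lt_of_le one_pos (le_max_left _ _))
  have hub : ∀ y z : ℝ, 0 < y → 0 < z →
      gfun γ Φ y z ≤ c₂ * ((y + z) ^ a * (y ^ (-α) * z ^ (-(α + 1)))) := by
    intro y z hy hz
    have h := (gfun_sandwich γ p Φ c₁ c₂ hΦlb hΦub hy hz).2
    rw [hαdef, hadef]; exact h
  have hlb : ∀ y z : ℝ, 0 < y → 0 < z →
      c₁ * ((y + z) ^ a * (y ^ (-α) * z ^ (-(α + 1)))) ≤ gfun γ Φ y z := by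
    intro y z hy hz
    have h := (gfun_sandwich γ p Φ c₁ c₂ hΦlb hΦub hy hz).1
    rw [hαdef, hadef]; exact h
  have hg0 : ∀ y z : ℝ, 0 < y → 0 < z → 0 ≤ gfun γ Φ y z := by
    intro y z hy hz
    refine le_trans ?_ (hlb y z hy hz); positivity
  have hmeas : ∀ y : ℝ, Measurable (gfun γ Φ y) := by
    intro y; unfold gfun; fun_prop
  have hub1 : ∀ y z : ℝ, 0 < y → y < 1 → 1 - y < z → z ≤ 1 →
      gfun γ Φ y z ≤ (C * y ^ (-α)) * z ^ (-(α' + 1)) := by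
    intro y z hy hy1 hz1 hz2
    have hz : 0 < z := by linarith
    refine le_trans (hub y z hy hz) ?_
    have h2 : (y + z) ^ a ≤ max 1 ((2:ℝ) ^ a) := by
      have := rpow_le_max (r := y + z) (r₁ := 1) (r₂ := 2) a one_pos (by linarith) (by linarith)
      simpa using this
    have h3 : z ^ (-(α + 1)) ≤ z ^ (-(α' + 1)) :=
      Real.rpow_le_rpow_of_exponent_ge hz hz2 (by linarith)
    calc c₂ * ((y + z) ^ a * (y ^ (-α) * z ^ (-(α + 1))))
        ≤ c₂ * (max 1 ((2:ℝ) ^ a) * (y ^ (-α) * z ^ (-(α' + 1)))) := by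
          refine mul_le_mul_of_nonneg_left ?_ hc₂.le
          refine mul_le_mul h2 (mul_le_mul_of_nonneg_left h3 (by positivity)) (by positivity) ?_
          have : (0:ℝ) < max 1 ((2:ℝ) ^ a) := lt_of_lt_of_le one_pos (le_max_left _ _)
          linarith
      _ = (C * y ^ (-α)) * z ^ (-(α' + 1)) := by rw [hCdef]; ring
  have hub2 : ∀ y z : ℝ, 0 < y → y < 1 → 1 ≤ z →
      gfun γ Φ y z ≤ (C * y ^ (-α)) * z ^ ((a - 3) / 2) := by
    intro y z hy hy1 hz1
    have hz : 0 < z := lt_of_lt_of_le one_pos hz1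
    refine le_trans (hub y z hy hz) ?_
    have h2 : (y + z) ^ a ≤ max 1 ((2:ℝ) ^ a) * z ^ a := by
      rcases le_or_gt 0 a with hc | hc
      · calc (y + z) ^ a ≤ (2 * z) ^ a := Real.rpow_le_rpow (by linarith) (by linarith) hc
          _ = (2:ℝ) ^ a * z ^ a := Real.mul_rpow (by norm_num) hz.le
          _ ≤ max 1 ((2:ℝ) ^ a) * z ^ a :=
              mul_le_mul_of_nonneg_right (le_max_right _ _) (by positivity)
      · calc (y + z) ^ a ≤ z ^ a := Real.rpow_le_rpow_of_nonpos hz (by linarith) hc.le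
          _ ≤ max 1 ((2:ℝ) ^ a) * z ^ a := le_mul_of_one_le_left (by positivity) (le_max_left _ _)
    have h4 : z ^ a * z ^ (-(α + 1)) = z ^ ((a - 3) / 2) := by
      rw [← Real.rpow_add hz, show a + -(α + 1) = (a - 3) / 2 by rw [hαdef, hadef]; ring]
    calc c₂ * ((y + z) ^ a * (y ^ (-α) * z ^ (-(α + 1))))
        ≤ c₂ * ((max 1 ((2:ℝ) ^ a) * z ^ a) * (y ^ (-α) * z ^ (-(α + 1)))) := by
          refine mul_le_mul_of_nonneg_left ?_ hc₂.le
          refine mul_le_mul_of_nonneg_right h2 (by positivity)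
      _ = (C * y ^ (-α)) * (z ^ a * z ^ (-(α + 1))) := by rw [hCdef]; ring
      _ = _ := by rw [h4]
  have e1 : -(α' + 1) < -1 := by linarith
  have e2 : (a - 3) / 2 < -1 := by linarith
  have hslice : ∀ y : ℝ, 0 < y → y < 1 → IntegrableOn (gfun γ Φ y) (Ioi (1 - y)) := by
    intro y hy hy1
    have h0y : (0:ℝ) < 1 - y := by linarith
    have hD : IntegrableOn
        (fun z : ℝ => (C * y ^ (-α)) * (z ^ (-(α' + 1)) + z ^ ((a - 3) / 2))) (Ioi (1 - y)) :=
      ((integrableOn_Ioi_rpow_of_lt e1 h0y).add (integrableOn_Ioi_rpow_of_lt e2 h0y)).const_mul _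
    refine Integrable.mono' hD ((hmeas y).aestronglyMeasurable) ?_
    rw [ae_restrict_iff' measurableSet_Ioi]
    refine Filter.Eventually.of_forall (fun z hz => ?_)
    have hz1 : 1 - y < z := hz
    have hz0 : 0 < z := by linarith
    rw [Real.norm_eq_abs, abs_of_nonneg (hg0 y z hy hz0)]
    rcases le_or_gt z 1 with h | h
    · calc gfun γ Φ y z ≤ (C * y ^ (-α)) * z ^ (-(α' + 1)) := hub1 y z hy hy1 hz1 h
        _ ≤ (C * y ^ (-α)) * (z ^ (-(α' + 1)) + z ^ ((a - 3) / 2)) :=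
            mul_le_mul_of_nonneg_left (le_add_of_nonneg_right (by positivity)) (by positivity)
    · calc gfun γ Φ y z ≤ (C * y ^ (-α)) * z ^ ((a - 3) / 2) := hub2 y z hy hy1 h.le
        _ ≤ (C * y ^ (-α)) * (z ^ (-(α' + 1)) + z ^ ((a - 3) / 2)) :=
            mul_le_mul_of_nonneg_left (le_add_of_nonneg_left (by positivity)) (by positivity)
  have hIoc : ∀ y : ℝ, 0 < y → y < 1 → IntegrableOn (gfun γ Φ y) (Ioc (1 - y) 1) :=
    fun y hy hy1 => (hslice y hy hy1).mono_set (fun z hz => hz.1)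
  have hIoi1 : ∀ y : ℝ, 0 < y → y < 1 → IntegrableOn (gfun γ Φ y) (Ioi 1) :=
    fun y hy hy1 => (hslice y hy hy1).mono_set (Ioi_subset_Ioi (by linarith))
  have hFsplit : ∀ y : ℝ, 0 < y → y < 1 →
      (∫ z in Ioi (1 - y), gfun γ Φ y z)
        = (∫ z in Ioc (1 - y) 1, gfun γ Φ y z) + ∫ z in Ioi (1:ℝ), gfun γ Φ y z := by
    intro y hy hy1
    rw [← setIntegral_union (Ioc_disjoint_Ioi le_rfl) measurableSet_Ioi
      (hIoc y hy hy1) (hIoi1 y hy hy1), Ioc_union_Ioi_eq_Ioi (by linarith : 1 - y ≤ 1)]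
  have hint_z1 : ∀ y : ℝ, 0 < y → y < 1 →
      (∫ z in Ioc (1 - y) 1, gfun γ Φ y z) ≤ (C * y ^ (-α)) * ((1 - y) ^ (-α') / α') := by
    intro y hy hy1
    have h0y : (0:ℝ) < 1 - y := by linarith
    have hint : IntegrableOn (fun z : ℝ => (C * y ^ (-α)) * z ^ (-(α' + 1))) (Ioi (1 - y)) :=
      (integrableOn_Ioi_rpow_of_lt e1 h0y).const_mul _
    have step1 : (∫ z in Ioc (1 - y) 1, gfun γ Φ y z)
        ≤ ∫ z in Ioc (1 - y) 1, (C * y ^ (-α)) * z ^ (-(α' + 1)) := by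
      refine setIntegral_mono_on (hIoc y hy hy1) (hint.mono_set (fun z hz => hz.1))
        measurableSet_Ioc (fun z hz => hub1 y z hy hy1 hz.1 hz.2)
    have step2 : (∫ z in Ioc (1 - y) 1, (C * y ^ (-α)) * z ^ (-(α' + 1)))
        ≤ ∫ z in Ioi (1 - y), (C * y ^ (-α)) * z ^ (-(α' + 1)) := by
      refine setIntegral_mono_set hint ?_ (HasSubset.Subset.eventuallyLE Ioc_subset_Ioi_self)
      filter_upwards [ae_restrict_mem measurableSet_Ioi] with z hz
      have hz0 : 0 < z := by have : 1 - y < z := hz; linarith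
      simp only [Pi.zero_apply]
      positivity
    have step3 : (∫ z in Ioi (1 - y), (C * y ^ (-α)) * z ^ (-(α' + 1)))
        = (C * y ^ (-α)) * ((1 - y) ^ (-α') / α') := by
      rw [MeasureTheory.integral_const_mul, integral_Ioi_rpow_of_lt e1 h0y,
        show -(α' + 1) + 1 = -α' by ring]
      field_simp
    linarith
  have hint_z2 : ∀ y : ℝ, 0 < y → y < 1 →
      (∫ z in Ioi (1:ℝ), gfun γ Φ y z) ≤ (C * y ^ (-α)) * (2 / (1 - a)) := by
    intro y hy hy1
    have hint : IntegrableOn (fun z : ℝ => (C * y ^ (-α)) * z ^ ((a - 3) / 2)) (Ioi 1) :=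
      (integrableOn_Ioi_rpow_of_lt e2 one_pos).const_mul _
    have step1 : (∫ z in Ioi (1:ℝ), gfun γ Φ y z)
        ≤ ∫ z in Ioi (1:ℝ), (C * y ^ (-α)) * z ^ ((a - 3) / 2) :=
      setIntegral_mono_on (hIoi1 y hy hy1) hint measurableSet_Ioi
        (fun z hz => hub2 y z hy hy1 (le_of_lt hz))
    have step2 : (∫ z in Ioi (1:ℝ), (C * y ^ (-α)) * z ^ ((a - 3) / 2))
        = (C * y ^ (-α)) * (2 / (1 - a)) := by
      rw [MeasureTheory.integral_const_mul, integral_Ioi_rpow_of_lt e2 one_pos, Real.one_rpow]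
      congr 1
      rw [show (a - 3) / 2 + 1 = (a - 1) / 2 by ring]
      rw [div_eq_div_iff (by linarith) (by linarith)]
      ring
    linarith
  set F : ℝ → ℝ := fun y => ∫ z in Ioi (1 - y), gfun γ Φ y z with hFdef
  set H : ℝ → ℝ := fun y =>
      (C / α') * (y ^ (-α) * (1 - y) ^ (-α')) + (C * (2 / (1 - a))) * y ^ (-α) with hHdef
  have hFleH : ∀ y ∈ Ioo (0:ℝ) 1, F y ≤ H y := by
    intro y hy
    rw [hFdef, hHdef]
    simp only
    rw [hFsplit y hy.1 hy.2]
    have := add_le_add (hint_z1 y hy.1 hy.2) (hint_z2 y hy.1 hy.2)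
    refine le_trans this (le_of_eq ?_)
    ring
  have hrpowint : IntegrableOn (fun y : ℝ => y ^ (-α)) (Ioo 0 1) := by
    have h := intervalIntegral.intervalIntegrable_rpow' (a := 0) (b := 1)
      (show (-1:ℝ) < -α by linarith)
    exact h.1.mono_set Ioo_subset_Ioc_self
  have hHint : IntegrableOn H (Ioo 0 1) := by
    rw [hHdef]
    exact (((betaInt hα1 hα'1).const_mul _).add (hrpowint.const_mul _))
  have hFnn : ∀ y ∈ Ioo (0:ℝ) 1, 0 ≤ F y := by
    intro y hy
    refine setIntegral_nonneg measurableSet_Ioi (fun z hz => ?_)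
    have hz0 : 0 < z := by have : 1 - y < z := hz; have := hy.2; linarith
    exact hg0 y z hy.1 hz0
  have hFmeas : StronglyMeasurable F := by
    have hind : Measurable (fun q : ℝ × ℝ =>
        Set.indicator {q : ℝ × ℝ | 1 - q.1 < q.2} (fun q : ℝ × ℝ => gfun γ Φ q.1 q.2) q) := by
      refine Measurable.indicator (gfun_meas γ Φ hΦmeas) ?_
      exact measurableSet_lt (measurable_const.sub measurable_fst) measurable_snd
    have heq : F = fun y => ∫ z, Set.indicator {q : ℝ × ℝ | 1 - q.1 < q.2}
        (fun q : ℝ × ℝ => gfun γ Φ q.1 q.2) (y, z) := by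
      funext y
      rw [hFdef]
      simp only
      rw [← integral_indicator measurableSet_Ioi]
      congr 1
    rw [heq]
    exact hind.stronglyMeasurable.integral_prod_right'
  have hFint : IntegrableOn F (Ioo 0 1) := by
    refine Integrable.mono' hHint hFmeas.aestronglyMeasurable.restrict ?_
    rw [ae_restrict_iff' measurableSet_Ioo]
    refine Filter.Eventually.of_forall (fun y hy => ?_)
    rw [Real.norm_eq_abs, abs_of_nonneg (hFnn y hy)]
    exact hFleH y hy
  -- lower bound
  set δ : ℝ := c₁ * (min ((3/2:ℝ) ^ a) ((3:ℝ) ^ a) *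
      (min ((1/2:ℝ) ^ (-α)) ((1:ℝ) ^ (-α)) *
        min ((1:ℝ) ^ (-(α + 1))) ((2:ℝ) ^ (-(α + 1))))) with hδdef
  have hδpos : 0 < δ := by
    rw [hδdef]
    have m1 : 0 < min ((3/2:ℝ) ^ a) ((3:ℝ) ^ a) := lt_min (by positivity) (by positivity)
    have m2 : 0 < min ((1/2:ℝ) ^ (-α)) ((1:ℝ) ^ (-α)) := lt_min (by positivity) (by positivity)
    have m3 : 0 < min ((1:ℝ) ^ (-(α + 1))) ((2:ℝ) ^ (-(α + 1))) :=
      lt_min (by positivity) (by positivity)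
    positivity
  have hbox : ∀ y z : ℝ, y ∈ Icc (1/2:ℝ) (3/4) → z ∈ Icc (1:ℝ) 2 → δ ≤ gfun γ Φ y z := by
    intro y z hy hz
    have hy0 : 0 < y := lt_of_lt_of_le (by norm_num) hy.1
    have hz0 : 0 < z := lt_of_lt_of_le one_pos hz.1
    refine le_trans ?_ (hlb y z hy0 hz0)
    have h1 : min ((3/2:ℝ) ^ a) ((3:ℝ) ^ a) ≤ (y + z) ^ a :=
      min_rpow_le a (by norm_num) (by have := hy.1; have := hz.1; linarith)
        (by have := hy.2; have := hz.2; linarith)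
    have h2 : min ((1/2:ℝ) ^ (-α)) ((1:ℝ) ^ (-α)) ≤ y ^ (-α) :=
      min_rpow_le _ (by norm_num) hy.1 (by have := hy.2; linarith)
    have h3 : min ((1:ℝ) ^ (-(α + 1))) ((2:ℝ) ^ (-(α + 1))) ≤ z ^ (-(α + 1)) :=
      min_rpow_le _ one_pos hz.1 hz.2
    rw [hδdef]
    refine mul_le_mul_of_nonneg_left ?_ hc₁.le
    have m2 : 0 ≤ min ((1/2:ℝ) ^ (-α)) ((1:ℝ) ^ (-α)) :=
      le_min (by positivity) (by positivity)
    have m3 : 0 ≤ min ((1:ℝ) ^ (-(α + 1))) ((2:ℝ) ^ (-(α + 1))) :=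
      le_min (by positivity) (by positivity)
    refine mul_le_mul h1 (mul_le_mul h2 h3 m3 (by positivity)) (mul_nonneg m2 m3) (by positivity)
  have hlow1 : ∀ y ∈ Ioo (1/2:ℝ) (3/4), δ ≤ F y := by
    intro y hy
    have hy0 : 0 < y := by have := hy.1; linarith
    have hy1 : y < 1 := by have := hy.2; linarith
    have hsub12 : Ioc (1:ℝ) 2 ⊆ Ioi (1 - y) := by
      intro z hz
      have : (1:ℝ) < z := hz.1
      have : 1 - y < 1 := by linarith [hy.1]
      exact lt_trans this hz.1
    have hIoc12 : IntegrableOn (gfun γ Φ y) (Ioc 1 2) := (hslice y hy0 hy1).mono_set hsub12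
    have s1 : (∫ _ in Ioc (1:ℝ) 2, δ) = δ := by
      rw [setIntegral_const, Real.volume_real_Ioc]
      norm_num
    have s2 : (∫ _ in Ioc (1:ℝ) 2, δ) ≤ ∫ z in Ioc (1:ℝ) 2, gfun γ Φ y z := by
      refine setIntegral_mono_on (integrableOn_const measure_Ioc_lt_top.ne) hIoc12
        measurableSet_Ioc (fun z hz => hbox y z ⟨hy.1.le, hy.2.le⟩ ⟨hz.1.le, hz.2⟩)
    have s3 : (∫ z in Ioc (1:ℝ) 2, gfun γ Φ y z) ≤ F y := by
      refine setIntegral_mono_set (hslice y hy0 hy1) ?_ (HasSubset.Subset.eventuallyLE hsub12)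
      filter_upwards [ae_restrict_mem measurableSet_Ioi] with z hz
      have hz0 : 0 < z := by have : 1 - y < z := hz; linarith
      simp only [Pi.zero_apply]
      exact hg0 y z hy0 hz0
    linarith
  have hsub : Ioo (1/2:ℝ) (3/4) ⊆ Ioo (0:ℝ) 1 := Ioo_subset_Ioo (by norm_num) (by norm_num)
  have h4 : δ * (1/4) ≤ ∫ y in Ioo (1/2:ℝ) (3/4), F y := by
    have hconst : (∫ _ in Ioo (1/2:ℝ) (3/4), δ) = δ * (1/4) := by
      rw [setIntegral_const, Real.volume_real_Ioo_of_le (by norm_num)]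
      rw [show (3/4 : ℝ) - 1/2 = 1/4 by norm_num]
      rw [smul_eq_mul]; ring
    rw [← hconst]
    exact setIntegral_mono_on (integrableOn_const measure_Ioo_lt_top.ne)
      (hFint.mono_set hsub) measurableSet_Ioo hlow1
  have h5 : (∫ y in Ioo (1/2:ℝ) (3/4), F y) ≤ ∫ y in Ioo (0:ℝ) 1, F y := by
    refine setIntegral_mono_set hFint ?_ (HasSubset.Subset.eventuallyLE hsub)
    filter_upwards [ae_restrict_mem measurableSet_Ioo] with y hy
    simp only [Pi.zero_apply]
    exact hFnn y hy
  have : 0 < δ * (1/4) := by positivity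
  linarith
lemma scale_eq (γ : ℝ) (Φ : ℝ → ℝ) {x : ℝ} (hx : 0 < x) :
    (∫ y in Ioo 0 x, ∫ z in Ioi (x - y), gfun γ Φ y z)
      = ∫ y in Ioo (0:ℝ) 1, ∫ z in Ioi (1 - y), gfun γ Φ y z := by
  have hinner : ∀ u ∈ Ioo (0:ℝ) 1,
      (∫ z in Ioi (x - x * u), gfun γ Φ (x * u) z)
        = x⁻¹ * ∫ w in Ioi (1 - u), gfun γ Φ u w := by
    intro u hu
    have h1 := MeasureTheory.integral_comp_mul_left_Ioi (fun z => gfun γ Φ (x * u) z) (1 - u) hx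
    have h2 : EqOn (fun w => gfun γ Φ (x * u) (x * w))
        (fun w => x ^ (-(2:ℝ)) * gfun γ Φ u w) (Ioi (1 - u)) := by
      intro w hw
      have hw0 : 0 < w := by
        have : 1 - u < w := hw
        have := hu.2
        linarith
      exact gfun_scale γ Φ hx hu.1 hw0
    rw [setIntegral_congr_fun measurableSet_Ioi h2, MeasureTheory.integral_const_mul] at h1
    have hx2 : x ^ (-(2:ℝ)) = x⁻¹ * x⁻¹ := by
      rw [show (-(2:ℝ)) = (-1) + (-1) by norm_num, Real.rpow_add hx, Real.rpow_neg_one]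
    rw [hx2, smul_eq_mul] at h1
    rw [show x - x * u = x * (1 - u) by ring]
    have hxne := hx.ne'
    field_simp at h1 ⊢
    exact h1.symm
  calc (∫ y in Ioo 0 x, ∫ z in Ioi (x - y), gfun γ Φ y z)
      = ∫ y in (0:ℝ)..x, ∫ z in Ioi (x - y), gfun γ Φ y z := by
        rw [intervalIntegral.integral_of_le hx.le, integral_Ioc_eq_integral_Ioo]
    _ = x * ∫ u in (0:ℝ)..1, ∫ z in Ioi (x - x * u), gfun γ Φ (x * u) z := by
        have h3 := intervalIntegral.integral_comp_mul_left
          (fun y => ∫ z in Ioi (x - y), gfun γ Φ y z) hx.ne' (a := (0:ℝ)) (b := (1:ℝ))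
        rw [mul_zero, mul_one, smul_eq_mul] at h3
        rw [h3, ← mul_assoc, mul_inv_cancel₀ hx.ne', one_mul]
    _ = x * ∫ u in Ioo (0:ℝ) 1, ∫ z in Ioi (x - x * u), gfun γ Φ (x * u) z := by
        rw [intervalIntegral.integral_of_le zero_le_one, integral_Ioc_eq_integral_Ioo]
    _ = x * ∫ u in Ioo (0:ℝ) 1, x⁻¹ * ∫ w in Ioi (1 - u), gfun γ Φ u w := by
        rw [setIntegral_congr_fun measurableSet_Ioo hinner]
    _ = _ := by
        rw [MeasureTheory.integral_const_mul, ← mul_assoc, mul_inv_cancel₀ hx.ne', one_mul]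

/-- for `γ + 2p < 1`, `Φ` comparable to `s^{−p}(1−s)^{−p}`,
`K(x,y) = (x+y)^γ Φ(x/(x+y))`, and `f(x) = b_{Φ,γ} √J₀ x^{−(γ+3)/2}` with the
normalizing constant `b_{Φ,γ}`, the flux satisfies `J(x;f) = J₀` for all `x > 0`. -/
theorem stmt_3 (γ p : ℝ) (h1 : γ + 2 * p < 1)
    (Φ : ℝ → ℝ) (hΦmeas : Measurable Φ)
    (c₁ c₂ : ℝ) (hc₁ : 0 < c₁) (hc₁₂ : c₁ ≤ c₂)
    (hΦlb : ∀ s ∈ Set.Ioo (0 : ℝ) 1, c₁ * s ^ (-p) * (1 - s) ^ (-p) ≤ Φ s)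
    (hΦub : ∀ s ∈ Set.Ioo (0 : ℝ) 1, Φ s ≤ c₂ * s ^ (-p) * (1 - s) ^ (-p))
    (K : ℝ → ℝ → ℝ)
    (hK : ∀ x y : ℝ, K x y = (x + y) ^ γ * Φ (x / (x + y)))
    (J₀ : ℝ) (hJ₀ : 0 < J₀)
    (b : ℝ)
    (hb : b = (∫ y in Set.Ioo (0 : ℝ) 1, ∫ z in Set.Ioi (1 - y),
        (y + z) ^ γ * y ^ (-((γ + 1) / 2)) * z ^ (-((γ + 3) / 2)) * Φ (y / (y + z)))
        ^ (-(1 / 2) : ℝ))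
    (f : ℝ → ℝ)
    (hf : ∀ x : ℝ, f x = b * Real.sqrt J₀ * x ^ (-((γ + 3) / 2))) :
    ∀ x : ℝ, 0 < x → coagJ K f x = J₀ := by
  intro x hx
  have hI : 0 < ∫ y in Ioo (0:ℝ) 1, ∫ z in Ioi (1 - y), gfun γ Φ y z :=
    Ipos γ p h1 Φ hΦmeas c₁ c₂ hc₁ hc₁₂ hΦlb hΦub
  have hbI : b = (∫ y in Ioo (0:ℝ) 1, ∫ z in Ioi (1 - y), gfun γ Φ y z) ^ (-(1 / 2) : ℝ) := hb
  unfold coagJ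
  have hcongr : EqOn (fun y => ∫ z in Ioi (x - y), K y z * y * f y * f z)
      (fun y => ∫ z in Ioi (x - y), (b ^ 2 * J₀) * gfun γ Φ y z) (Ioo 0 x) := by
    intro y hy
    simp only
    refine setIntegral_congr_fun measurableSet_Ioi (fun z hz => ?_)
    have hy0 : 0 < y := hy.1
    have hz0 : 0 < z := lt_trans (sub_pos.mpr hy.2) hz
    rw [hK, hf y, hf z]
    have hs : Real.sqrt J₀ * Real.sqrt J₀ = J₀ := Real.mul_self_sqrt hJ₀.le
    have hyy : y * y ^ (-((γ + 3) / 2)) = y ^ (-((γ + 1) / 2)) := by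
      nth_rewrite 1 [← Real.rpow_one y]
      rw [← Real.rpow_add hy0, show (1:ℝ) + -((γ + 3) / 2) = -((γ + 1) / 2) by ring]
    have hgdef : gfun γ Φ y z = (y + z) ^ γ * y ^ (-((γ + 1) / 2)) * z ^ (-((γ + 3) / 2)) *
        Φ (y / (y + z)) := rfl
    calc (y + z) ^ γ * Φ (y / (y + z)) * y * (b * Real.sqrt J₀ * y ^ (-((γ + 3) / 2))) *
          (b * Real.sqrt J₀ * z ^ (-((γ + 3) / 2)))
        = (b ^ 2 * (Real.sqrt J₀ * Real.sqrt J₀)) * ((y + z) ^ γ * (y * y ^ (-((γ + 3) / 2))) *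
            z ^ (-((γ + 3) / 2)) * Φ (y / (y + z))) := by ring
      _ = (b ^ 2 * J₀) * gfun γ Φ y z := by rw [hs, hyy, hgdef]
  rw [setIntegral_congr_fun measurableSet_Ioo hcongr]
  simp_rw [MeasureTheory.integral_const_mul]
  rw [scale_eq γ Φ hx, hbI]
  set I : ℝ := ∫ y in Ioo (0:ℝ) 1, ∫ z in Ioi (1 - y), gfun γ Φ y z with hIdef
  rw [← Real.rpow_natCast (I ^ (-(1/2):ℝ)) 2, ← Real.rpow_mul hI.le]
  norm_num [Real.rpow_neg_one]
  field_simp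
end

section
/- Let γ, p ∈ ℝ with 0 ≤ γ + 2p < 1, let Φ : (0,1) → [0,∞) be measurable with Φ(s) ≤ c₂·s^{−p}(1−s)^{−p} for all s ∈ (0,1), suppose Φ(s) = Φ(1−s) for s ∈ (0,1), and set K(x,y) = (x+y)^γ Φ(x/(x+y)). Let f : (0,∞) → [0,∞) be measurable such that H(X) := e^{(γ+3)X/2} f(e^X) is bounded on ℝ, and define W(Y) = (e^{Y/2}+e^{−Y/2})^γ Φ(1/(1+e^Y)). Then for every X ∈ ℝ: J(e^X; f) = B(H,H;W)(X). -/
open MeasureTheory Real Set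

/-!
Substituting `y = e^Y`, `z = e^Z` turns `J(e^X; f)` into an integral over `Y < X` and
`e^Z > e^X - e^Y = e^{X + log(1 - e^{Y-X})}`. With `e^Y + e^Z = e^{(Y+Z)/2} (e^{(Y-Z)/2} + e^{-(Y-Z)/2})`
and the symmetry `Φ(s) = Φ(1-s)`, which turns `Φ(e^Y/(e^Y+e^Z))` into `Φ(1/(1+e^{Y-Z}))`,
the two integrands then agree pointwise.
-/

theorem integral_comp_exp_Iio {E : Type*} [NormedAddCommGroup E] [NormedSpace ℝ E]
    (g : ℝ → E) (a : ℝ) :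
    ∫ x in Iio a, exp x • g (exp x) = ∫ y in Ioo 0 (exp a), g y := by
  symm; rw [← image_exp_Iio]
  simpa [abs_of_pos (exp_pos _)] using integral_image_eq_integral_abs_deriv_smul
    measurableSet_Iio (fun x _ ↦ (hasDerivAt_exp x).hasDerivWithinAt)
    (fun x _ y _ hxy ↦ exp_injective hxy) g

theorem exp_sub_exp_eq_exp_add_log {X Y : ℝ} (h : Y < X) :
    exp X - exp Y = exp (X + log (1 - exp (Y - X))) := by
  have hpos : 0 < 1 - exp (Y - X) := sub_pos.2 (exp_lt_one_iff.2 (sub_neg.2 h))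
  rw [exp_add, exp_log hpos, mul_sub, mul_one, ← exp_add, add_sub_cancel]

theorem exp_add_exp_eq_exp_half_mul (Y Z : ℝ) :
    exp Y + exp Z = exp ((Y + Z) / 2) * (exp ((Y - Z) / 2) + exp (-(Y - Z) / 2)) := by
  rw [mul_add, ← exp_add, ← exp_add]
  congr 2 <;> ring

theorem one_div_one_add_exp_sub (Y Z : ℝ) :
    1 / (1 + exp (Y - Z)) = exp Z / (exp Y + exp Z) := by
  rw [exp_sub]
  field_simp
  ring

theorem apply_div_add_eq_apply_div_add {Φ : ℝ → ℝ} (hΦsym : ∀ s ∈ Ioo (0 : ℝ) 1, Φ s = Φ (1 - s))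
    {a b : ℝ} (ha : 0 < a) (hb : 0 < b) : Φ (a / (a + b)) = Φ (b / (a + b)) := by
  have hs : a / (a + b) ∈ Ioo (0 : ℝ) 1 :=
    ⟨by positivity, (div_lt_one (by positivity)).2 (by linarith)⟩
  rw [hΦsym _ hs, one_sub_div (add_pos ha hb).ne', add_sub_cancel_left]

theorem kernel_mul_exp_eq {γ : ℝ} {Φ : ℝ → ℝ}
    (hΦsym : ∀ s ∈ Ioo (0 : ℝ) 1, Φ s = Φ (1 - s)) (Y Z : ℝ) :
    exp Y * (exp Z * ((exp Y + exp Z) ^ γ * Φ (exp Y / (exp Y + exp Z)) * exp Y)) =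
      exp ((Y - Z) / 2) *
        ((exp ((Y - Z) / 2) + exp (-(Y - Z) / 2)) ^ γ * Φ (1 / (1 + exp (Y - Z)))) *
        exp ((γ + 3) * Y / 2) * exp ((γ + 3) * Z / 2) := by
  have hpow : (exp Y + exp Z) ^ γ =
      exp ((Y + Z) / 2 * γ) * (exp ((Y - Z) / 2) + exp (-(Y - Z) / 2)) ^ γ := by
    rw [exp_add_exp_eq_exp_half_mul, mul_rpow (exp_pos _).le (by positivity), ← exp_mul]
  have hexp : exp Y * exp Z * exp ((Y + Z) / 2 * γ) * exp Y =
      exp ((Y - Z) / 2) * exp ((γ + 3) * Y / 2) * exp ((γ + 3) * Z / 2) := by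
    simp only [← exp_add]
    ring_nf
  rw [hpow, apply_div_add_eq_apply_div_add hΦsym (exp_pos Y) (exp_pos Z),
    one_div_one_add_exp_sub]
  linear_combination (exp ((Y - Z) / 2) + exp (-(Y - Z) / 2)) ^ γ *
    Φ (exp Z / (exp Y + exp Z)) * hexp

theorem stmt_4_general (γ : ℝ)
    (Φ : ℝ → ℝ)
    (hΦsym : ∀ s ∈ Set.Ioo (0 : ℝ) 1, Φ s = Φ (1 - s))
    (K : ℝ → ℝ → ℝ)
    (hK : ∀ x y : ℝ, K x y = (x + y) ^ γ * Φ (x / (x + y)))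
    (f : ℝ → ℝ)
    (H : ℝ → ℝ)
    (hH : ∀ X : ℝ, H X = Real.exp ((γ + 3) * X / 2) * f (Real.exp X))
    (W : ℝ → ℝ)
    (hW : ∀ Y : ℝ, W Y =
      (Real.exp (Y / 2) + Real.exp (-Y / 2)) ^ γ * Φ (1 / (1 + Real.exp Y))) :
    ∀ X : ℝ, coagJ K f (Real.exp X) = coagB W H H X := by
  intro X
  rw [coagJ, coagB, ← integral_comp_exp_Iio]
  refine setIntegral_congr_fun measurableSet_Iio fun Y (hY : Y < X) => ?_
  rw [exp_sub_exp_eq_exp_add_log hY, ← integral_comp_exp_Ioi, smul_eq_mul,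
    ← integral_const_mul]
  refine setIntegral_congr_fun measurableSet_Ioi fun Z _ => ?_
  rw [smul_eq_mul, hK, hW, hH, hH]
  linear_combination f (exp Y) * f (exp Z) * kernel_mul_exp_eq (γ := γ) hΦsym Y Z

/-- the flux of `f` for the kernel `K(x,y) = (x+y)^γ Φ(x/(x+y))`,
expressed in logarithmic variables `H(X) = e^{(γ+3)X/2} f(e^X)` and
`W(Y) = (e^{Y/2}+e^{−Y/2})^γ Φ(1/(1+e^Y))`, satisfies `J(e^X;f) = B(H,H;W)(X)`. -/
theorem stmt_4 (γ p : ℝ) (h0 : 0 ≤ γ + 2 * p) (h1 : γ + 2 * p < 1)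
    (Φ : ℝ → ℝ) (hΦmeas : Measurable Φ)
    (hΦnn : ∀ s ∈ Set.Ioo (0 : ℝ) 1, 0 ≤ Φ s)
    (c₂ : ℝ)
    (hΦub : ∀ s ∈ Set.Ioo (0 : ℝ) 1, Φ s ≤ c₂ * s ^ (-p) * (1 - s) ^ (-p))
    (hΦsym : ∀ s ∈ Set.Ioo (0 : ℝ) 1, Φ s = Φ (1 - s))
    (K : ℝ → ℝ → ℝ)
    (hK : ∀ x y : ℝ, K x y = (x + y) ^ γ * Φ (x / (x + y)))
    (f : ℝ → ℝ) (hfmeas : Measurable f) (hfnn : ∀ x : ℝ, 0 < x → 0 ≤ f x)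
    (H : ℝ → ℝ)
    (hH : ∀ X : ℝ, H X = Real.exp ((γ + 3) * X / 2) * f (Real.exp X))
    (M : ℝ) (hHbd : ∀ X : ℝ, |H X| ≤ M)
    (W : ℝ → ℝ)
    (hW : ∀ Y : ℝ, W Y =
      (Real.exp (Y / 2) + Real.exp (-Y / 2)) ^ γ * Φ (1 / (1 + Real.exp Y))) :
    ∀ X : ℝ, coagJ K f (Real.exp X) = coagB W H H X :=
  stmt_4_general γ Φ hΦsym K hK f H hH W hW
end
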